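/- arXiv:1606.00020 — 7 statements merged into one kernel-verified Lean document; each statement's English description precedes it below -/
import Mathlib

section
/- Let R be a commutative ring, let x, t ∈ R, let λ = (λ_1 > ⋯ > λ_n ≥ 1) be a strict partition of length n and μ = (μ_1 > ⋯ > μ_{n-1} ≥ 1) a strict partition of length n−1, and set μ_n = 0. Define h : ℤ → R by h_m = 0 for m < 0, h_0 = 1, and h_m = (1+t)·x^m for m ≥ 1 (so h_m is the coefficient of z^m in (1+t·x·z)/(1−x·z)). Then the n×n determinant det_{1≤p,q≤n}( h_{λ_q − μ_p} ) equals t^{r(λ;μ)} · (1+t)^{s(λ;μ)−r(λ;μ)+1} · x^{|λ|−|μ|} if μ interleaves λ, and equals 0 otherwise. (This is the paper's Jacobi–Trudi-type determinant expression for the Δ one-row Boltzmann weight, obtained by combining Theorem 1 with the appendix Proposition identifying this weight with a one-variable supersymmetric skew Schur function.) -/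
/-!
Right-multiplying by a unitriangular matrix replaces column `q` by
`h (λ_q - μ_p) - x ^ (λ_q - λ_{q+1}) * h (λ_{q+1} - μ_p)`, which vanishes unless
`λ_{q+1} ≤ μ_p ≤ λ_q` and otherwise equals `x ^ (λ_q - μ_p)` times `1`, `t` or `1 + t`.
Since `μ` is strictly decreasing, the support of the new matrix is a monotone relation between rows
and columns, so only the identity permutation contributes to the determinant: it is the product
of the diagonal, whose factors are read off from the interleaving data, the untouched last column
contributing `(1 + t) x ^ λ_n` because `μ_n = 0`.
-/

open Finset Matrix

section

variable {R : Type*} [CommRing R]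

theorem Matrix.det_eq_prod_diag_of_monotone_support {n : Type*} [Fintype n] [DecidableEq n]
    [LinearOrder n] (A : Matrix n n R)
    (hA : ∀ p p' q q', p < p' → A p q ≠ 0 → A p' q' ≠ 0 → q ≤ q') :
    A.det = ∏ i, A i i := by
  rw [det_apply, sum_eq_single 1 (fun σ _ hσ => ?_) (by simp)]
  · simp
  obtain ⟨c, hc⟩ : ∃ c, A (σ c) c = 0 := by
    by_contra! hne
    have hmono : Monotone σ.symm := fun p p' hpp' => by
      rcases hpp'.lt_or_eq with hlt | rfl
      · exact hA p p' _ _ hlt (by simpa using hne (σ.symm p)) (by simpa using hne (σ.symm p'))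
      · rfl
    have hid := (hmono.strictMono_of_injective σ.symm.injective).eq_id
    exact hσ (Equiv.ext fun c => by simpa using (congrFun hid (σ c)).symm)
  rw [prod_eq_zero (f := fun i => A (σ i) i) (mem_univ c) hc, smul_zero]

theorem Matrix.det_eq_prod_diag_of_interlacing_support {n : ℕ} (A : Matrix (Fin n) (Fin n) R)
    (a : Fin (n + 1) → ℕ) (b : Fin n → ℕ) (ha : Antitone a) (hb : StrictAnti b)
    (hA : ∀ p q, A p q ≠ 0 → a q.succ ≤ b p ∧ b p ≤ a q.castSucc) :
    A.det = ∏ i, A i i := by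
  refine det_eq_prod_diag_of_monotone_support A fun p p' q q' hp hq hq' => ?_
  by_contra! hlt
  have : a q.castSucc ≤ a q'.succ := ha (Fin.succ_le_castSucc_iff.mpr hlt)
  have := hb hp
  have := hA p q hq
  have := hA p' q' hq'
  omega

def hcoeff (x t : R) (k : ℤ) : R :=
  if k < 0 then 0 else if k = 0 then 1 else (1 + t) * x ^ k.toNat

theorem eq_hcoeff {x t : R} {h : ℤ → R} (hneg : ∀ k : ℤ, k < 0 → h k = 0)
    (hzero : h 0 = 1) (hpos : ∀ k : ℤ, 0 < k → h k = (1 + t) * x ^ k.toNat) :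
    h = hcoeff x t := by
  ext k
  rcases lt_trichotomy k 0 with hk | rfl | hk
  · simp [hcoeff, hk, hneg]
  · simp [hcoeff, hzero]
  · simp [hcoeff, hk.not_gt, hk.ne', hpos k hk]

theorem hcoeff_natCast_sub (x t : R) (a u : ℕ) :
    hcoeff x t (a - u) = if a < u then 0 else if a = u then 1 else (1 + t) * x ^ (a - u) := by
  unfold hcoeff
  split_ifs <;> first | omega | rfl | (congr 2; omega)

def interlaceWeight (t : R) (a b u : ℕ) : R :=
  if u = a then 1 else if u = b then t else 1 + t

theorem hcoeff_sub_pow_mul_hcoeff (x t : R) {a b : ℕ} (u : ℕ) (hba : b < a) :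
    hcoeff x t (a - u) - x ^ (a - b) * hcoeff x t (b - u) =
      if b ≤ u ∧ u ≤ a then interlaceWeight t a b u * x ^ (a - u) else 0 := by
  rw [hcoeff_natCast_sub, hcoeff_natCast_sub, interlaceWeight]
  split_ifs <;> try omega
  · ring
  · simp [show a - u = 0 by omega]
  · ring
  · rw [show a - b = a - u by omega]; ring
  · rw [show a - u = (a - b) + (b - u) by omega, pow_add]; ring

theorem interlaceWeight_eq_pow_mul_pow (t : R) {a b u : ℕ} (hba : b < a) (hua : u ≤ a) :
    interlaceWeight t a b u =
      t ^ (if u = b then 1 else 0) *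
        (1 + t) ^ ((if u < a then 1 else 0) - if u = b then 1 else 0) := by
  unfold interlaceWeight
  split_ifs <;> first | omega | simp

theorem prod_interlaceWeight {ι : Type*} (s : Finset ι) (t : R) (a b u : ι → ℕ)
    (hba : ∀ i ∈ s, b i < a i) (hua : ∀ i ∈ s, u i ≤ a i) :
    ∏ i ∈ s, interlaceWeight t (a i) (b i) (u i) =
      t ^ #{i ∈ s | u i = b i} * (1 + t) ^ (#{i ∈ s | u i < a i} - #{i ∈ s | u i = b i}) := by
  rw [prod_congr rfl fun i hi => interlaceWeight_eq_pow_mul_pow t (hba i hi) (hua i hi),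
    prod_mul_distrib, prod_pow_eq_pow_sum, prod_pow_eq_pow_sum, card_filter, card_filter,
    sum_tsub_distrib]
  intro i hi
  have := hba i hi
  split_ifs <;> omega

def colReduce (x : R) {n : ℕ} (lam : Fin n → ℕ) : Matrix (Fin n) (Fin n) R :=
  of fun j q => if j = q then 1 else if (j : ℕ) = q + 1 then -x ^ (lam q - lam j) else 0

theorem det_colReduce (x : R) {n : ℕ} (lam : Fin n → ℕ) : (colReduce x lam).det = 1 := by
  rw [det_of_isLowerTriangular _ fun i j (hij : i < j) => ?_]
  · simp [colReduce]
  · simp [colReduce, hij.ne, show (i : ℕ) ≠ j + 1 by omega]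

theorem mul_colReduce_castSucc (x : R) {m : ℕ} (lam : Fin (m + 1) → ℕ)
    (A : Matrix (Fin (m + 1)) (Fin (m + 1)) R) (p : Fin (m + 1)) (q : Fin m) :
    (A * colReduce x lam) p q.castSucc =
      A p q.castSucc - x ^ (lam q.castSucc - lam q.succ) * A p q.succ := by
  rw [mul_apply, Fintype.sum_eq_add q.castSucc q.succ (Fin.castSucc_lt_succ).ne fun j hj => ?_]
  · simp [colReduce, Fin.ext_iff, sub_eq_add_neg, mul_comm]
  · simp only [ne_eq, Fin.ext_iff, Fin.val_succ, Fin.val_castSucc] at hj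
    simp [colReduce, Fin.ext_iff, hj]

theorem mul_colReduce_last (x : R) {m : ℕ} (lam : Fin (m + 1) → ℕ)
    (A : Matrix (Fin (m + 1)) (Fin (m + 1)) R) (p : Fin (m + 1)) :
    (A * colReduce x lam) p (Fin.last m) = A p (Fin.last m) := by
  rw [mul_apply, Fintype.sum_eq_single (Fin.last m) fun j hj => ?_]
  · simp [colReduce]
  · simp [colReduce, hj, show (j : ℕ) ≠ m + 1 by omega]

theorem det_mul_colReduce {n : ℕ} (A : Matrix (Fin n) (Fin n) R) (x : R) (lam : Fin n → ℕ) :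
    (A * colReduce x lam).det = A.det := by
  rw [det_mul, det_colReduce, mul_one]

def jtMatrix (x t : R) {n : ℕ} (lam mu : Fin n → ℕ) : Matrix (Fin n) (Fin n) R :=
  of fun p q => hcoeff x t ((lam q : ℤ) - (mu p : ℤ))

variable {m : ℕ} {lam mu : Fin (m + 1) → ℕ}

theorem jtMatrix_mul_colReduce_castSucc (x t : R) (hlam : StrictAnti lam) (p : Fin (m + 1))
    (q : Fin m) :
    (jtMatrix x t lam mu * colReduce x lam) p q.castSucc =
      if lam q.succ ≤ mu p ∧ mu p ≤ lam q.castSucc then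
        interlaceWeight t (lam q.castSucc) (lam q.succ) (mu p) * x ^ (lam q.castSucc - mu p)
      else 0 := by
  rw [mul_colReduce_castSucc]
  exact hcoeff_sub_pow_mul_hcoeff x t _ (hlam Fin.castSucc_lt_succ)

theorem Antitone.snoc_zero (hlam : Antitone lam) :
    Antitone (Fin.snoc lam 0 : Fin (m + 2) → ℕ) := by
  refine Fin.antitone_iff_succ_le.mpr fun i => ?_
  induction i using Fin.lastCases with
  | last => simp
  | cast i =>
    rw [Fin.succ_castSucc, Fin.snoc_castSucc, Fin.snoc_castSucc]
    exact hlam Fin.castSucc_lt_succ.le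

-- The untouched last column is supported on the interval `[0, λ_n]`.
theorem jtMatrix_mul_colReduce_ne_zero (x t : R) (hlam : StrictAnti lam) {p q : Fin (m + 1)}
    (hpq : (jtMatrix x t lam mu * colReduce x lam) p q ≠ 0) :
    (Fin.snoc lam 0 : Fin (m + 2) → ℕ) q.succ ≤ mu p ∧
      mu p ≤ (Fin.snoc lam 0 : Fin (m + 2) → ℕ) q.castSucc := by
  induction q using Fin.lastCases with
  | last =>
    rw [Fin.succ_last, Fin.snoc_last, Fin.snoc_castSucc]
    refine ⟨Nat.zero_le _, not_lt.mp fun h => hpq ?_⟩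
    rw [mul_colReduce_last, jtMatrix, of_apply, hcoeff_natCast_sub, if_pos h]
  | cast q =>
    rw [Fin.succ_castSucc, Fin.snoc_castSucc, Fin.snoc_castSucc]
    by_contra h
    exact hpq (by rw [jtMatrix_mul_colReduce_castSucc x t hlam, if_neg h])

theorem det_jtMatrix (x t : R) (hlam : StrictAnti lam) (hlam1 : ∀ i, 1 ≤ lam i)
    (hmu : StrictAnti mu) (hmu0 : mu (Fin.last m) = 0) :
    (jtMatrix x t lam mu).det =
      (∏ c : Fin m, if lam c.succ ≤ mu c.castSucc ∧ mu c.castSucc ≤ lam c.castSucc then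
          interlaceWeight t (lam c.castSucc) (lam c.succ) (mu c.castSucc) *
            x ^ (lam c.castSucc - mu c.castSucc)
        else 0) * ((1 + t) * x ^ lam (Fin.last m)) := by
  rw [← det_mul_colReduce _ x lam, det_eq_prod_diag_of_interlacing_support _ _ mu
    hlam.antitone.snoc_zero hmu fun _ _ => jtMatrix_mul_colReduce_ne_zero x t hlam,
    Fin.prod_univ_castSucc]
  congr 1
  · exact prod_congr rfl fun c _ => jtMatrix_mul_colReduce_castSucc x t hlam _ c
  · rw [mul_colReduce_last, jtMatrix, of_apply, hcoeff_natCast_sub, hmu0]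
    have := hlam1 (Fin.last m)
    simp [show lam (Fin.last m) ≠ 0 by omega]

end

/-- the Jacobi–Trudi type determinant expression for the Δ one-row weight.
`lam` is a strict partition of length `m+1` (all parts ≥ 1) and `mu` is a strict
partition of length `m` padded with a final part `0`.  `h k` is the coefficient of
`z^k` in `(1 + t x z)/(1 - x z)`. -/
theorem stmt1 {R : Type*} [CommRing R] (m : ℕ) (x t : R)
    (lam mu : Fin (m + 1) → ℕ)
    (hlam : StrictAnti lam) (hlam1 : ∀ i, 1 ≤ lam i)
    (hmu : StrictAnti mu) (hmu0 : mu (Fin.last m) = 0)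
    (h : ℤ → R)
    (hneg : ∀ k : ℤ, k < 0 → h k = 0) (hzero : h 0 = 1)
    (hpos : ∀ k : ℤ, 0 < k → h k = (1 + t) * x ^ k.toNat) :
    (((∀ i : Fin m, mu i.castSucc ≤ lam i.castSucc ∧ lam i.succ ≤ mu i.castSucc) →
      Matrix.det (Matrix.of fun p q : Fin (m + 1) => h ((lam q : ℤ) - (mu p : ℤ)))
        = t ^ (Finset.univ.filter (fun i : Fin m => mu i.castSucc = lam i.succ)).card *
          (1 + t) ^
            ((Finset.univ.filter (fun i : Fin m => mu i.castSucc < lam i.castSucc)).card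
              - (Finset.univ.filter (fun i : Fin m => mu i.castSucc = lam i.succ)).card + 1) *
          x ^ ((∑ i, lam i) - (∑ i, mu i))) ∧
    ((¬ ∀ i : Fin m, mu i.castSucc ≤ lam i.castSucc ∧ lam i.succ ≤ mu i.castSucc) →
      Matrix.det (Matrix.of fun p q : Fin (m + 1) => h ((lam q : ℤ) - (mu p : ℤ))) = 0)) := by
  obtain rfl := eq_hcoeff hneg hzero hpos
  change (_ → (jtMatrix x t lam mu).det = _) ∧ (_ → (jtMatrix x t lam mu).det = 0)
  rw [det_jtMatrix x t hlam hlam1 hmu hmu0]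
  refine ⟨fun hint => ?_, fun hint => ?_⟩
  · have hexp : ∑ i, lam i - ∑ i, mu i =
        ∑ c : Fin m, (lam c.castSucc - mu c.castSucc) + lam (Fin.last m) := by
      rw [Fin.sum_univ_castSucc lam, Fin.sum_univ_castSucc mu, hmu0,
        sum_tsub_distrib _ fun c _ => (hint c).1]
      have := sum_le_sum fun c (_ : c ∈ univ) => (hint c).1
      omega
    rw [prod_congr rfl fun c _ => if_pos ((hint c).symm), prod_mul_distrib,
      prod_interlaceWeight univ t (fun c => lam c.castSucc) (fun c => lam c.succ)
        (fun c => mu c.castSucc) (fun c _ => hlam Fin.castSucc_lt_succ) (fun c _ => (hint c).1),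
      prod_pow_eq_pow_sum, hexp, pow_add, pow_succ]
    ring
  · obtain ⟨c, hc⟩ := not_forall.mp hint
    rw [prod_eq_zero (mem_univ c) (if_neg fun h => hc h.symm), zero_mul]
end

section
/- Let R be a commutative ring, let u, t ∈ R, let λ = (λ_1 > ⋯ > λ_n ≥ 1) be a strict partition of length n, let μ = (μ_1 > ⋯ > μ_{n-1} ≥ 1) be a strict partition of length n−1, and let k be an integer with k > λ_1 and k > μ_1. Define ν = (ν_1,…,ν_n) by ν_1 = k and ν_p = μ_{p−1} for 2 ≤ p ≤ n, and define c : ℤ → R by c_m = 0 for m < 0, c_0 = 1, and c_m = (1+t)·u^m for m ≥ 1. Then det_{1≤p,q≤n}( c_{ν_p − λ_q} ) equals t^{l(λ;μ)} · (1+t)^{s(λ;μ)−r(λ;μ)+1} · u^{k+|μ|−|λ|} if μ interleaves λ, and equals 0 otherwise. (Under u = x^{−1} this is the Γ-case of Theorem 1: the free-fermionic one-row weight ⟨μ| ψ_{k−1/2} e^{φ_−(x;t)} |λ⟩ = t^{l}(1+t)^{s−r+1} x^{|λ|−|μ|−k}.) -/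
/-!
Subtract `u ^ (ν p - μ p)` times row `p + 1` from row `p` of `(c (ν p - λ q))`. Since
`ν (p + 1) = μ p`, the new entry `rowEntry (ν p) (μ p) (λ q)` vanishes unless
`μ p ≤ λ q ≤ ν p`; for the last row nothing changes, as `c (0 - λ q) = 0`.
If `μ` does not interleave `λ`, some `λ i` lies outside `[μ i, ν i]`, and monotonicity turns this
into a block of zeros whose sides add up to `n + 1`, so the determinant vanishes.
If it does, the new matrix is tridiagonal and each pair of entries `(p, p + 1)`, `(p + 1, p)`
contains a zero, so the determinant is the product of the diagonal entries, which are
`t u ^ (ν p - λ p)`, `1` or `(1 + t) u ^ (ν p - λ p)` according as `λ p = μ p`, `λ p = ν p`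
or neither.
-/

open Finset

namespace Matrix

variable {R : Type*} [CommRing R]

theorem det_eq_zero_of_zero_block {n : Type*} [Fintype n] [DecidableEq n] (A : Matrix n n R)
    (s t : Finset n) (hst : ∀ i ∈ s, ∀ j ∈ t, A i j = 0)
    (hcard : Fintype.card n < #s + #t) : A.det = 0 := by
  rw [det_apply]
  refine sum_eq_zero fun σ _ => ?_
  obtain ⟨i, hi⟩ := inter_nonempty_of_card_lt_card_add_card (subset_univ s)
    (subset_univ (t.map σ.toEmbedding)) (by simpa using hcard)
  obtain ⟨his, hit⟩ : i ∈ s ∧ σ.symm i ∈ t := by simpa using hi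
  rw [prod_eq_zero (mem_univ (σ.symm i)) (by simpa using hst i his _ hit), smul_zero]

theorem det_one_sub_mul_of_strictUpper {n : Type*} [Fintype n] [DecidableEq n] [LinearOrder n]
    (W A : Matrix n n R) (hW : ∀ i j, j ≤ i → W i j = 0) : ((1 - W) * A).det = A.det := by
  have hupper : (1 - W).IsUpperTriangular := fun i j (hji : j < i) => by
    simp [one_apply_ne hji.ne', hW i j hji.le]
  rw [det_mul, det_of_isUpperTriangular hupper, prod_eq_one fun i _ => by simp [hW i i le_rfl],
    one_mul]

theorem det_succ_eq_mul_of_column_zero {n : ℕ} (A : Matrix (Fin (n + 1)) (Fin (n + 1)) R)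
    (h : ∀ i : Fin n, A i.succ 0 = 0) : A.det = A 0 0 * (A.submatrix Fin.succ Fin.succ).det := by
  simp [det_succ_column_zero A, Fin.sum_univ_succ, h]

theorem det_succ_eq_mul_of_row_zero {n : ℕ} (A : Matrix (Fin (n + 1)) (Fin (n + 1)) R)
    (h : ∀ j : Fin n, A 0 j.succ = 0) : A.det = A 0 0 * (A.submatrix Fin.succ Fin.succ).det := by
  simp [det_succ_row_zero A, Fin.sum_univ_succ, h]

theorem det_eq_prod_diag_of_tridiagonal {n : ℕ} (A : Matrix (Fin n) (Fin n) R)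
    (hfar : ∀ p q : Fin n, (p : ℕ) + 2 ≤ q ∨ (q : ℕ) + 2 ≤ p → A p q = 0)
    (hadj : ∀ p q : Fin n, (q : ℕ) = p + 1 → A p q = 0 ∨ A q p = 0) :
    A.det = ∏ p, A p p := by
  induction n with
  | zero => simp
  | succ n ih =>
    have hminor : (A.submatrix Fin.succ Fin.succ).det = ∏ p : Fin n, A p.succ p.succ :=
      ih _ (fun p q h => hfar _ _ (by simp only [Fin.val_succ]; omega))
        (fun p q h => hadj _ _ (by simp only [Fin.val_succ]; omega))
    have hedge : (∀ i : Fin n, A i.succ 0 = 0) ∨ (∀ j : Fin n, A 0 j.succ = 0) := by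
      rcases n with _ | n
      · exact Or.inl fun i => i.elim0
      have hfar0 : ∀ i : Fin (n + 1), i ≠ 0 → A i.succ 0 = 0 ∧ A 0 i.succ = 0 := fun i hi =>
        have : (i : ℕ) ≠ 0 := Fin.val_ne_zero_iff.mpr hi
        ⟨hfar _ _ (by simp only [Fin.val_succ, Fin.val_zero]; omega),
          hfar _ _ (by simp only [Fin.val_succ, Fin.val_zero]; omega)⟩
      rcases hadj 0 (Fin.succ 0) rfl with h | h
      · exact Or.inr fun j => by
          rcases eq_or_ne j 0 with rfl | hj
          exacts [h, (hfar0 j hj).2]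
      · exact Or.inl fun i => by
          rcases eq_or_ne i 0 with rfl | hi
          exacts [h, (hfar0 i hi).1]
    rw [Fin.prod_univ_succ, ← hminor]
    rcases hedge with h | h
    exacts [det_succ_eq_mul_of_column_zero A h, det_succ_eq_mul_of_row_zero A h]

end Matrix

section Coefficients

variable {R : Type*} [CommRing R] (u t : R)

/-- The coefficient of `z ^ j` in `(1 + t u z) / (1 - u z)`. -/
def oneRowCoeff (j : ℤ) : R :=
  if j < 0 then 0 else if j = 0 then 1 else (1 + t) * u ^ j.toNat

theorem oneRowCoeff_natSub_of_lt {a x : ℕ} (h : a < x) : oneRowCoeff u t ((a : ℤ) - x) = 0 := by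
  simp [oneRowCoeff, h]

theorem oneRowCoeff_natSub_self (a : ℕ) : oneRowCoeff u t ((a : ℤ) - a) = 1 := by
  simp [oneRowCoeff]

theorem oneRowCoeff_natSub_of_gt {a x : ℕ} (h : x < a) :
    oneRowCoeff u t ((a : ℤ) - x) = (1 + t) * u ^ (a - x) := by
  rw [oneRowCoeff, if_neg (by omega), if_neg (by omega), show ((a : ℤ) - x).toNat = a - x by omega]

def rowEntry (a b x : ℕ) : R :=
  oneRowCoeff u t ((a : ℤ) - x) - u ^ (a - b) * oneRowCoeff u t ((b : ℤ) - x)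

variable {u t}

theorem rowEntry_eq_zero {a b x : ℕ} (hba : b ≤ a) (hx : x < b ∨ a < x) :
    rowEntry u t a b x = 0 := by
  rcases hx with hx | hx
  · rw [rowEntry, oneRowCoeff_natSub_of_gt u t (by omega), oneRowCoeff_natSub_of_gt u t hx,
      show a - x = (a - b) + (b - x) by omega, pow_add]
    ring
  · rw [rowEntry, oneRowCoeff_natSub_of_lt u t hx, oneRowCoeff_natSub_of_lt u t (by omega),
      mul_zero, sub_zero]

theorem rowEntry_of_le_of_le {a b x : ℕ} (hba : b < a) (hbx : b ≤ x) (hxa : x ≤ a) :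
    rowEntry u t a b x = (if x = b then t else if x = a then 1 else 1 + t) * u ^ (a - x) := by
  rcases hbx.eq_or_lt with rfl | hbx
  · rw [rowEntry, oneRowCoeff_natSub_of_gt u t hba, oneRowCoeff_natSub_self, if_pos rfl]
    ring
  rcases hxa.eq_or_lt with rfl | hxa
  · rw [rowEntry, oneRowCoeff_natSub_self, oneRowCoeff_natSub_of_lt u t hbx, if_neg hbx.ne',
      if_pos rfl, Nat.sub_self]
    ring
  · rw [rowEntry, oneRowCoeff_natSub_of_gt u t hxa, oneRowCoeff_natSub_of_lt u t hbx,
      if_neg hbx.ne', if_neg hxa.ne]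
    ring

end Coefficients

section Interleaving

open Matrix

variable {R : Type*} [CommRing R] {u t : R} {m : ℕ} {lam mu ν : Fin (m + 1) → ℕ}

theorem interleaves_iff_forall_between (hν : ∀ i : Fin m, ν i.succ = mu i.castSucc)
    (hmu0 : mu (Fin.last m) = 0) (hlam0 : lam 0 ≤ ν 0) :
    (∀ i : Fin m, mu i.castSucc ≤ lam i.castSucc ∧ lam i.succ ≤ mu i.castSucc) ↔
      ∀ p, mu p ≤ lam p ∧ lam p ≤ ν p := by
  refine ⟨fun h p => ⟨?_, ?_⟩, fun h i => ⟨(h i.castSucc).1, hν i ▸ (h i.succ).2⟩⟩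
  · cases p using Fin.lastCases with
    | last => simp [hmu0]
    | cast i => exact (h i).1
  · cases p using Fin.cases with
    | zero => exact hlam0
    | succ i => exact hν i ▸ (h i).2

theorem det_oneRowCoeff_eq_det_rowEntry (hν : ∀ i : Fin m, ν i.succ = mu i.castSucc)
    (hmu0 : mu (Fin.last m) = 0) (hlam1 : ∀ q, 1 ≤ lam q) :
    (of fun p q => oneRowCoeff u t ((ν p : ℤ) - lam q)).det =
      (of fun p q => rowEntry u t (ν p) (mu p) (lam q)).det := by
  set M : Matrix (Fin (m + 1)) (Fin (m + 1)) R := of fun p q => oneRowCoeff u t ((ν p : ℤ) - lam q)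
  set W : Matrix (Fin (m + 1)) (Fin (m + 1)) R :=
    of fun p r => if (r : ℕ) = p + 1 then u ^ (ν p - mu p) else 0
  have hWM : ∀ p q, (W * M) p q = u ^ (ν p - mu p) * oneRowCoeff u t ((mu p : ℤ) - lam q) := by
    intro p q
    rw [mul_apply]
    cases p using Fin.lastCases with
    | last =>
      rw [hmu0, oneRowCoeff_natSub_of_lt u t (hlam1 q), mul_zero]
      exact sum_eq_zero fun r _ => by simp [W]; omega
    | cast i =>
      rw [sum_eq_single i.succ (fun r _ hr => by simp [W, Fin.ext_iff] at hr ⊢; omega)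
        (by simp)]
      simp [W, M, hν]
  have hW : ∀ p r, r ≤ p → W p r = 0 := fun p r (h : (r : ℕ) ≤ p) => by
    simp only [W, of_apply]; rw [if_neg (by omega)]
  rw [← det_one_sub_mul_of_strictUpper W M hW]
  congr 1
  ext p q
  simp [sub_mul, hWM, rowEntry, M]

theorem det_rowEntry_eq_zero (hlam : Antitone lam) (hmu : Antitone mu) (hνanti : Antitone ν)
    (hmuν : ∀ p, mu p ≤ ν p) (h : ∃ i, lam i < mu i ∨ ν i < lam i) :
    (of fun p q => rowEntry u t (ν p) (mu p) (lam q)).det = 0 := by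
  obtain ⟨i, hi | hi⟩ := h
  · refine det_eq_zero_of_zero_block _ (Iic i) (Ici i) (fun p hp q hq => ?_) ?_
    · simp only [mem_Iic, mem_Ici] at hp hq
      exact rowEntry_eq_zero (hmuν p) (Or.inl ((hlam hq).trans_lt (hi.trans_le (hmu hp))))
    · simp only [Fin.card_Iic, Fin.card_Ici, Fintype.card_fin]; omega
  · refine det_eq_zero_of_zero_block _ (Ici i) (Iic i) (fun p hp q hq => ?_) ?_
    · simp only [mem_Iic, mem_Ici] at hp hq
      exact rowEntry_eq_zero (hmuν p) (Or.inr ((hνanti hp).trans_lt (hi.trans_le (hlam hq))))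
    · simp only [Fin.card_Iic, Fin.card_Ici, Fintype.card_fin]; omega

theorem lam_le_mu_of_lt (hlam : Antitone lam) (hν : ∀ i : Fin m, ν i.succ = mu i.castSucc)
    (hI : ∀ p, mu p ≤ lam p ∧ lam p ≤ ν p) {p q : Fin (m + 1)} (h : p < q) : lam q ≤ mu p := by
  let j : Fin m := ⟨p, by omega⟩
  calc lam q ≤ lam j.succ := hlam (by simp [Fin.le_def, j]; omega)
    _ ≤ ν j.succ := (hI _).2
    _ = mu p := hν j

theorem nu_le_lam_of_lt (hlam : Antitone lam) (hν : ∀ i : Fin m, ν i.succ = mu i.castSucc)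
    (hI : ∀ p, mu p ≤ lam p ∧ lam p ≤ ν p) {p q : Fin (m + 1)} (h : q < p) : ν p ≤ lam q := by
  let j : Fin m := ⟨p - 1, by omega⟩
  have hp : j.succ = p := by ext; simp [j]; omega
  calc ν p = mu j.castSucc := hp ▸ hν j
    _ ≤ lam j.castSucc := (hI _).1
    _ ≤ lam q := hlam (by simp [Fin.le_def, j]; omega)

theorem det_rowEntry_eq_prod_diag (hlam : StrictAnti lam)
    (hν : ∀ i : Fin m, ν i.succ = mu i.castSucc) (hmuν : ∀ p, mu p ≤ ν p)
    (hI : ∀ p, mu p ≤ lam p ∧ lam p ≤ ν p) :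
    (of fun p q => rowEntry u t (ν p) (mu p) (lam q)).det =
      ∏ p, rowEntry u t (ν p) (mu p) (lam p) := by
  refine det_eq_prod_diag_of_tridiagonal _ (fun p q hpq => ?_) (fun p q hpq => ?_)
  · rcases hpq with hpq | hpq
    · let j : Fin (m + 1) := ⟨p + 1, by omega⟩
      have hj : lam q < lam j := hlam (Fin.lt_def.2 (by simp only [j]; omega))
      exact rowEntry_eq_zero (hmuν p) (Or.inl (hj.trans_le
        (lam_le_mu_of_lt hlam.antitone hν hI (Fin.lt_def.2 (by simp only [j]; omega)))))
    · let j : Fin (m + 1) := ⟨q + 1, by omega⟩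
      have hj : lam j < lam q := hlam (Fin.lt_def.2 (by simp only [j]; omega))
      exact rowEntry_eq_zero (hmuν p) (Or.inr ((nu_le_lam_of_lt hlam.antitone hν hI
        (Fin.lt_def.2 (by simp only [j]; omega))).trans_lt hj))
  · have hpq' : p < q := Fin.lt_def.2 (by omega)
    have hνq : ν q = mu p := by
      let j : Fin m := ⟨p, by omega⟩
      rw [show q = j.succ by ext; simp [j]; omega, hν j]
      rfl
    rcases (lam_le_mu_of_lt hlam.antitone hν hI hpq').lt_or_eq with hlt | heq
    · exact Or.inl (rowEntry_eq_zero (hmuν p) (Or.inl hlt))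
    · exact Or.inr (rowEntry_eq_zero (hmuν q) (Or.inr (hνq ▸ heq ▸ hlam hpq')))

theorem prod_rowEntry_diag (hmuν : ∀ p, mu p < ν p) (hI : ∀ p, mu p ≤ lam p ∧ lam p ≤ ν p) :
    ∏ p, rowEntry u t (ν p) (mu p) (lam p) =
      t ^ #{p | lam p = mu p} * (1 + t) ^ #{p | mu p < lam p ∧ lam p < ν p} *
        u ^ (∑ p, ν p - ∑ p, lam p) := by
  have hdiag : ∀ p, rowEntry u t (ν p) (mu p) (lam p) =
      t ^ (if lam p = mu p then 1 else 0) *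
        (1 + t) ^ (if mu p < lam p ∧ lam p < ν p then 1 else 0) * u ^ (ν p - lam p) := by
    intro p
    rw [rowEntry_of_le_of_le (hmuν p) (hI p).1 (hI p).2]
    have := hmuν p; have := hI p
    split_ifs <;> first | omega | simp
  simp only [hdiag, prod_mul_distrib, prod_pow_eq_pow_sum, sum_boole, Nat.cast_id]
  rw [sum_tsub_distrib _ fun p _ => (hI p).2]

theorem card_lam_eq_mu (hlast : mu (Fin.last m) < lam (Fin.last m)) :
    #{p | lam p = mu p} = #{i : Fin m | mu i.castSucc = lam i.castSucc} := by
  simp only [card_filter, Fin.sum_univ_castSucc, if_neg hlast.ne', add_zero, eq_comm]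

theorem card_between_eq (hlam : StrictAnti lam) (hν : ∀ i : Fin m, ν i.succ = mu i.castSucc)
    (hlam0 : lam 0 < ν 0) (hlast : mu (Fin.last m) < lam (Fin.last m))
    (hmuν : ∀ p, mu p < ν p) (hI : ∀ p, mu p ≤ lam p ∧ lam p ≤ ν p) :
    #{p | mu p < lam p ∧ lam p < ν p} =
      #{i : Fin m | mu i.castSucc < lam i.castSucc} -
        #{i : Fin m | mu i.castSucc = lam i.succ} + 1 := by
  have hpart : #{p | lam p = mu p} + #{p | lam p = ν p} + #{p | mu p < lam p ∧ lam p < ν p} =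
      m + 1 := by
    simp only [card_filter, ← sum_add_distrib]
    trans ∑ _p : Fin (m + 1), 1
    · refine sum_congr rfl fun p _ => ?_
      have := hI p; have := hmuν p
      split_ifs <;> omega
    · simp
  have hB : #{p | lam p = ν p} = #{i : Fin m | mu i.castSucc = lam i.succ} := by
    simp only [Fin.card_filter_univ_succ', if_neg hlam0.ne, zero_add, hν, eq_comm]
  have hls : #{i : Fin m | mu i.castSucc = lam i.castSucc} +
      #{i : Fin m | mu i.castSucc < lam i.castSucc} = m := by
    simp only [card_filter, ← sum_add_distrib]
    trans ∑ _i : Fin m, 1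
    · refine sum_congr rfl fun i _ => ?_
      have := hI i.castSucc
      split_ifs <;> omega
    · simp
  have hrs : #{i : Fin m | mu i.castSucc = lam i.succ} ≤
      #{i : Fin m | mu i.castSucc < lam i.castSucc} :=
    card_le_card fun i => by
      simp only [mem_filter, mem_univ, true_and]
      exact fun h => h ▸ hlam (Fin.castSucc_lt_succ)
  have hA := card_lam_eq_mu hlast
  omega

end Interleaving

/-- the Γ-case of Theorem 1 as a determinant.  `lam` is a strict partition
of length `m+1` (all parts ≥ 1), `mu` a strict partition of length `m` padded with a
final `0`, and `k` an integer exceeding both `λ_1` and `μ_1`.  `ν = (k, μ_1, …, μ_{n-1})`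
and `c j` is the coefficient of `z^j` in `(1 + t u z)/(1 - u z)`. -/
theorem stmt2 {R : Type*} [CommRing R] (m : ℕ) (u t : R)
    (lam mu : Fin (m + 1) → ℕ)
    (hlam : StrictAnti lam) (hlam1 : ∀ i, 1 ≤ lam i)
    (hmu : StrictAnti mu) (hmu0 : mu (Fin.last m) = 0)
    (k : ℕ) (hk : lam 0 < k) (hk' : mu 0 < k)
    (c : ℤ → R)
    (hneg : ∀ j : ℤ, j < 0 → c j = 0) (hzero : c 0 = 1)
    (hpos : ∀ j : ℤ, 0 < j → c j = (1 + t) * u ^ j.toNat)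
    (ν : Fin (m + 1) → ℕ)
    (hν : ν = Fin.cases k (fun p : Fin m => mu p.castSucc)) :
    (((∀ i : Fin m, mu i.castSucc ≤ lam i.castSucc ∧ lam i.succ ≤ mu i.castSucc) →
      Matrix.det (Matrix.of fun p q : Fin (m + 1) => c ((ν p : ℤ) - (lam q : ℤ)))
        = t ^ (Finset.univ.filter (fun i : Fin m => mu i.castSucc = lam i.castSucc)).card *
          (1 + t) ^
            ((Finset.univ.filter (fun i : Fin m => mu i.castSucc < lam i.castSucc)).card
              - (Finset.univ.filter (fun i : Fin m => mu i.castSucc = lam i.succ)).card + 1) *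
          u ^ ((k + ∑ i, mu i) - (∑ i, lam i))) ∧
    ((¬ ∀ i : Fin m, mu i.castSucc ≤ lam i.castSucc ∧ lam i.succ ≤ mu i.castSucc) →
      Matrix.det (Matrix.of fun p q : Fin (m + 1) => c ((ν p : ℤ) - (lam q : ℤ))) = 0)) := by
  have hν0 : ν 0 = k := by rw [hν]; rfl
  have hνs : ∀ i : Fin m, ν i.succ = mu i.castSucc := fun i => by rw [hν]; rfl
  obtain rfl : c = oneRowCoeff u t := funext fun j => by
    rcases lt_trichotomy j 0 with h | rfl | h
    · simp [oneRowCoeff, h, hneg j h]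
    · simp [oneRowCoeff, hzero]
    · simp [oneRowCoeff, h.not_gt, h.ne', hpos j h]
  have hmuν : ∀ p, mu p < ν p := Fin.cases (hν0 ▸ hk') fun i => hνs i ▸ hmu (Fin.castSucc_lt_succ)
  have hνanti : StrictAnti ν := Fin.strictAnti_iff_succ_lt.2 fun i => hνs i ▸ hmuν _
  have hlast : mu (Fin.last m) < lam (Fin.last m) := hmu0 ▸ hlam1 _
  have hsum : ∑ p, ν p = k + ∑ i, mu i := by
    simp only [Fin.sum_univ_succ, hν0, hνs, Fin.sum_univ_castSucc mu, hmu0, add_zero]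
  rw [interleaves_iff_forall_between hνs hmu0 (hν0 ▸ hk.le),
    det_oneRowCoeff_eq_det_rowEntry hνs hmu0 hlam1]
  refine ⟨fun hI => ?_, fun hI => ?_⟩
  · rw [det_rowEntry_eq_prod_diag hlam hνs (fun p => (hmuν p).le) hI, prod_rowEntry_diag hmuν hI,
      card_lam_eq_mu hlast, card_between_eq hlam hνs (hν0 ▸ hk) hlast hmuν hI, hsum]
  · obtain ⟨i, hi⟩ := not_forall.1 hI
    refine det_rowEntry_eq_zero hlam.antitone hmu.antitone hνanti.antitone (fun p => (hmuν p).le)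
      ⟨i, ?_⟩
    omega
end

section
/- Let R be a commutative ℚ-algebra and let x_1,…,x_n, t ∈ R. In the formal power series ring R[[z_1,…,z_n]] one has exp( Σ_{q≥1} (1 + (−1)^{q+1} t^q)/q · (Σ_{j=1}^n x_j^q) · (Σ_{i=1}^n z_i^q) ) = Π_{1≤i,j≤n} (1 + t·z_i·x_j) · (1 − z_i·x_j)^{−1}, where the exponential is taken of the formal power series with zero constant term Σ_{q≥1} s_q(t)·(Σ_i z_i^q), s_q(t) := (1+(−1)^{q+1}t^q)/q · Σ_{j=1}^n x_j^q. (Lemma 'sumtheseries'.) -/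
/-! Write `Θ = ∑ᵢ zᵢ ∂/∂zᵢ` for the Euler operator, which multiplies the coefficient of `z^d`
by `|d|`. For `F` without constant term, `exp F` is the unique series `u` with constant term `1`
and `Θ u = Θ F · u`, because this equation determines the coefficients of `u` degree by degree.
Uniqueness makes `exp` additive, and the exponent splits as the sum over `(i, j)` of
`log (1 + t xⱼ zᵢ) - log (1 - xⱼ zᵢ)`. Each factor `1 + t xⱼ zᵢ` and `(1 - xⱼ zᵢ)⁻¹` satisfies the
same equation as the exponential of its logarithm, which is a one-variable computation with
`d/dX`, transported to `zᵢ` by substitution. -/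

/-- The geometric series `∑_{m ≥ 0} a^m z_i^m = (1 - a z_i)⁻¹` in `R[[z_1, …, z_n]]`. -/
noncomputable def geom {R : Type*} [CommRing R] {n : ℕ} (a : R) (i : Fin n) :
    MvPowerSeries (Fin n) R :=
  fun d => if d = Finsupp.single i (d i) then a ^ (d i) else 0

/-- The total degree `|d|` of an exponent `d`. -/
def expDeg {n : ℕ} (d : Fin n →₀ ℕ) : ℕ := d.sum fun _ m => m

/-- The formal power series `∑_{q ≥ 1} s_q(t) ⬝ (∑_i z_i^q)` with
`s_q(t) = (1 + (-1)^{q+1} t^q)/q ⬝ ∑_j x_j^q`: its only nonzero coefficients are at the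
monomials `z_i^q` (`q ≥ 1`), i.e. at exponents `d` supported at a single index, where the
coefficient is `s_{|d|}(t)`. -/
noncomputable def hamSeries {R : Type*} [CommRing R] [Algebra ℚ R] {n : ℕ}
    (x : Fin n → R) (t : R) : MvPowerSeries (Fin n) R :=
  fun d =>
    if d.support.card = 1 then
      ((expDeg d : ℚ))⁻¹ •
        ((1 + (-1 : R) ^ (expDeg d + 1) * t ^ expDeg d) * ∑ j, x j ^ expDeg d)
    else 0

/-- The exponential of a formal power series with zero constant term, defined by its
exponential series `∑_{k ≥ 0} F^k / k!`: since `F` has zero constant term, only the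
terms with `k ≤ |d|` contribute to the coefficient at `d`. -/
noncomputable def expPS {R : Type*} [CommRing R] [Algebra ℚ R] {n : ℕ}
    (F : MvPowerSeries (Fin n) R) : MvPowerSeries (Fin n) R :=
  fun d => ∑ k ∈ Finset.range (expDeg d + 1),
    ((k.factorial : ℚ))⁻¹ • MvPowerSeries.coeff (R := R) d (F ^ k)

namespace MvPowerSeries

section Euler

variable {σ R : Type*} [CommSemiring R]

noncomputable def eulerDeriv : Derivation R (MvPowerSeries σ R) (MvPowerSeries σ R) where
  toFun f d := d.degree • coeff d f
  map_add' f g := by ext d; exact smul_add _ (coeff d f) (coeff d g)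
  map_smul' r f := by ext d; exact smul_comm _ r (coeff d f)
  map_one_eq_zero' := by
    classical
    ext d
    change d.degree • coeff d (1 : MvPowerSeries σ R) = coeff d 0
    rw [coeff_one, map_zero]
    split_ifs with h <;> simp [h]
  leibniz' f g := by
    classical
    ext d
    change d.degree • coeff d (f * g) = _
    rw [smul_eq_mul, smul_eq_mul, mul_comm g, map_add, coeff_mul, coeff_mul, coeff_mul,
      Finset.smul_sum, ← Finset.sum_add_distrib]
    refine Finset.sum_congr rfl fun p hp => ?_
    rw [Finset.HasAntidiagonal.mem_antidiagonal] at hp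
    change _ = coeff p.1 f * (p.2.degree • coeff p.2 g) + (p.1.degree • coeff p.1 f) * coeff p.2 g
    rw [← hp, map_add, add_smul, mul_smul_comm, smul_mul_assoc, add_comm]

theorem coeff_eulerDeriv (f : MvPowerSeries σ R) (d : σ →₀ ℕ) :
    coeff d (eulerDeriv f) = d.degree • coeff d f := rfl

theorem constantCoeff_eulerDeriv (f : MvPowerSeries σ R) : constantCoeff (eulerDeriv f) = 0 := by
  rw [← coeff_zero_eq_constantCoeff_apply, coeff_eulerDeriv, map_zero, zero_smul]

theorem eq_of_eulerDeriv_eq_mul [IsAddTorsionFree R] {g u v : MvPowerSeries σ R}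
    (hg : constantCoeff g = 0) (hu : eulerDeriv u = g * u) (hv : eulerDeriv v = g * v)
    (h0 : constantCoeff u = constantCoeff v) : u = v := by
  classical
  ext d
  induction hd : d.degree using Nat.strong_induction_on generalizing d with
  | _ N ih =>
  rcases N.eq_zero_or_pos with rfl | hN
  · rw [(Finsupp.degree_eq_zero_iff d).mp hd, coeff_zero_eq_constantCoeff_apply,
      coeff_zero_eq_constantCoeff_apply, h0]
  have key : d.degree • coeff d u = d.degree • coeff d v := by
    rw [← coeff_eulerDeriv, ← coeff_eulerDeriv, hu, hv, coeff_mul, coeff_mul]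
    refine Finset.sum_congr rfl fun p hp => ?_
    rw [Finset.HasAntidiagonal.mem_antidiagonal] at hp
    rcases eq_or_ne p.1 0 with h1 | h1
    · rw [h1, coeff_zero_eq_constantCoeff_apply, hg, zero_mul, zero_mul]
    · have : p.2.degree < N := by
        rw [← hd, ← hp, map_add]
        have := (Finsupp.degree_eq_zero_iff p.1).not.mpr h1
        omega
      rw [ih _ this p.2 rfl]
  rw [hd] at key
  exact nsmul_right_injective hN.ne' key

end Euler

section Order

variable {σ R : Type*} [CommSemiring R] {F G : MvPowerSeries σ R}

theorem coeff_pow_eq_zero_of_degree_lt (hF : constantCoeff F = 0) {k : ℕ} {d : σ →₀ ℕ}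
    (h : d.degree < k) : coeff d (F ^ k) = 0 :=
  coeff_of_lt_order <| (Nat.cast_lt.mpr h).trans_le (le_order_pow_of_constantCoeff_eq_zero k hF)

theorem coeff_pow_mul_eq_zero_of_degree_le (hF : constantCoeff F = 0) (hG : constantCoeff G = 0)
    {k : ℕ} {d : σ →₀ ℕ} (h : d.degree ≤ k) : coeff d (F ^ k * G) = 0 := by
  refine coeff_of_lt_order <| lt_of_lt_of_le ?_ <| (add_le_add
    (le_order_pow_of_constantCoeff_eq_zero k hF) (one_le_order_iff_constCoeff_eq_zero.mpr hG)).trans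
    le_order_mul
  exact_mod_cast Nat.lt_succ_of_le h

end Order

end MvPowerSeries

open MvPowerSeries

section Exp

attribute [local instance] IsAddTorsionFree.of_module_rat

variable {R : Type*} [CommRing R] [Algebra ℚ R] {n : ℕ} {F G : MvPowerSeries (Fin n) R}

theorem coeff_expPS_of_degree_le (hF : constantCoeff F = 0) {d : Fin n →₀ ℕ} {N : ℕ}
    (h : d.degree ≤ N) :
    coeff d (expPS F) = ∑ k ∈ Finset.range (N + 1), (k.factorial : ℚ)⁻¹ • coeff d (F ^ k) :=
  Finset.sum_subset (Finset.range_subset_range.mpr (Nat.succ_le_succ h)) fun k _ hk => by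
    rw [coeff_pow_eq_zero_of_degree_lt hF (by simpa [expDeg] using hk), smul_zero]

theorem constantCoeff_expPS (F : MvPowerSeries (Fin n) R) : constantCoeff (expPS F) = 1 := by
  rw [← coeff_zero_eq_constantCoeff_apply]
  change ∑ k ∈ Finset.range (expDeg (0 : Fin n →₀ ℕ) + 1), _ = _
  simp [expDeg]

theorem coeff_mul_expPS (hF : constantCoeff F = 0) (G : MvPowerSeries (Fin n) R)
    {d : Fin n →₀ ℕ} {N : ℕ} (h : d.degree ≤ N) :
    coeff d (G * expPS F) =
      ∑ k ∈ Finset.range (N + 1), (k.factorial : ℚ)⁻¹ • coeff d (G * F ^ k) := by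
  simp only [coeff_mul, Finset.smul_sum]
  rw [Finset.sum_comm]
  refine Finset.sum_congr rfl fun p hp => ?_
  rw [Finset.HasAntidiagonal.mem_antidiagonal] at hp
  rw [coeff_expPS_of_degree_le hF (le_trans (by simp [← hp]) h), Finset.mul_sum]
  simp only [mul_smul_comm]

theorem eulerDeriv_expPS (hF : constantCoeff F = 0) :
    eulerDeriv (expPS F) = eulerDeriv F * expPS F := by
  ext d
  set N := d.degree
  have hEF := constantCoeff_eulerDeriv F
  calc coeff d (eulerDeriv (expPS F))
      = ∑ k ∈ Finset.range (N + 1), (k.factorial : ℚ)⁻¹ • coeff d (eulerDeriv (F ^ k)) := by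
        rw [coeff_eulerDeriv, coeff_expPS_of_degree_le hF le_rfl, Finset.smul_sum]
        exact Finset.sum_congr rfl fun k _ => by rw [coeff_eulerDeriv, smul_comm]
    _ = ∑ j ∈ Finset.range N, (j.factorial : ℚ)⁻¹ • coeff d (eulerDeriv F * F ^ j) := by
        rw [Finset.sum_range_succ', pow_zero, Derivation.map_one_eq_zero, map_zero, smul_zero,
          add_zero]
        refine Finset.sum_congr rfl fun j _ => ?_
        rw [Derivation.leibniz_pow, Nat.add_sub_cancel, smul_eq_mul, map_nsmul,
          ← Nat.cast_smul_eq_nsmul ℚ, smul_smul, mul_comm (F ^ j)]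
        congr 1
        rw [Nat.factorial_succ]
        push_cast
        field_simp
    _ = coeff d (eulerDeriv F * expPS F) := by
        rw [coeff_mul_expPS hF _ le_rfl, Finset.sum_range_succ, mul_comm _ (F ^ N),
          coeff_pow_mul_eq_zero_of_degree_le hF hEF le_rfl, smul_zero, add_zero]

theorem expPS_eq_of_eulerDeriv (hF : constantCoeff F = 0) {u : MvPowerSeries (Fin n) R}
    (hu : eulerDeriv u = eulerDeriv F * u) (hu0 : constantCoeff u = 1) : expPS F = u :=
  eq_of_eulerDeriv_eq_mul (constantCoeff_eulerDeriv F) (eulerDeriv_expPS hF) hu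
    ((constantCoeff_expPS F).trans hu0.symm)

theorem expPS_add (hF : constantCoeff F = 0) (hG : constantCoeff G = 0) :
    expPS (F + G) = expPS F * expPS G := by
  refine expPS_eq_of_eulerDeriv (by rw [map_add, hF, hG, add_zero]) ?_ ?_
  · rw [Derivation.leibniz, eulerDeriv_expPS hF, eulerDeriv_expPS hG, map_add, smul_eq_mul,
      smul_eq_mul]
    ring
  · rw [map_mul, constantCoeff_expPS, constantCoeff_expPS, mul_one]

theorem expPS_sum {ι : Type*} (s : Finset ι) (F : ι → MvPowerSeries (Fin n) R)
    (hF : ∀ a ∈ s, constantCoeff (F a) = 0) :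
    expPS (∑ a ∈ s, F a) = ∏ a ∈ s, expPS (F a) := by
  induction s using Finset.cons_induction with
  | empty => exact expPS_eq_of_eulerDeriv (map_zero _) (by simp) (map_one _)
  | cons a s ha ih =>
    rw [Finset.forall_mem_cons] at hF
    rw [Finset.sum_cons, Finset.prod_cons, expPS_add hF.1
      (by rw [map_sum]; exact Finset.sum_eq_zero hF.2), ih hF.2]

end Exp

namespace PowerSeries

section Logarithms

variable {R : Type*} [CommRing R] [Algebra ℚ R]

theorem constantCoeff_mk_inv_smul (g : ℕ → R) :
    constantCoeff (mk fun q => (q : ℚ)⁻¹ • g q) = 0 := by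
  rw [← coeff_zero_eq_constantCoeff_apply, coeff_mk, Nat.cast_zero, inv_zero, zero_smul]

theorem coeff_derivative_mk_inv_smul (g : ℕ → R) (m : ℕ) :
    coeff m (d⁄dX R (mk fun q => (q : ℚ)⁻¹ • g q)) = g (m + 1) := by
  rw [coeff_derivative, coeff_mk, smul_mul_assoc, mul_comm (g _), ← Nat.cast_add_one,
    ← nsmul_eq_mul, ← Nat.cast_smul_eq_nsmul ℚ, inv_smul_smul₀ (by positivity)]

/-- `log (1 + b X)` and `-log (1 - a X)`; their constant terms vanish because `(0 : ℚ)⁻¹ = 0`. -/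
noncomputable def logOneAddMul (b : R) : R⟦X⟧ :=
  mk fun q => (q : ℚ)⁻¹ • ((-1) ^ (q + 1) * b ^ q)

noncomputable def negLogOneSubMul (a : R) : R⟦X⟧ :=
  mk fun q => (q : ℚ)⁻¹ • a ^ q

theorem constantCoeff_logOneAddMul (b : R) : constantCoeff (logOneAddMul b) = 0 :=
  constantCoeff_mk_inv_smul _

theorem constantCoeff_negLogOneSubMul (a : R) : constantCoeff (negLogOneSubMul a) = 0 :=
  constantCoeff_mk_inv_smul _

theorem derivative_one_add_C_mul_X (b : R) :
    d⁄dX R (1 + C b * X) = d⁄dX R (logOneAddMul b) * (1 + C b * X) := by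
  have hD : d⁄dX R (1 + C b * X) = C b := by simp
  rw [hD, show ∀ f : R⟦X⟧, f * (1 + C b * X) = f + C b * (f * X) by intro f; ring]
  ext (_ | m) <;>
    simp only [map_add, coeff_C_mul, coeff_zero_mul_X, coeff_succ_mul_X, coeff_C, logOneAddMul,
      coeff_derivative_mk_inv_smul]
  · simp
  · simp only [Nat.add_eq_zero_iff, one_ne_zero, and_false, if_false]
    ring

theorem derivative_mk_pow (a : R) :
    d⁄dX R (mk (a ^ ·)) = d⁄dX R (negLogOneSubMul a) * mk (a ^ ·) := by
  ext m
  have hterm : ∀ p ∈ Finset.HasAntidiagonal.antidiagonal m,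
      coeff p.1 (d⁄dX R (negLogOneSubMul a)) * coeff p.2 (mk (a ^ ·)) = a ^ (m + 1) := by
    intro p hp
    rw [Finset.HasAntidiagonal.mem_antidiagonal] at hp
    rw [negLogOneSubMul, coeff_derivative_mk_inv_smul, coeff_mk, ← pow_add, ← hp, add_right_comm]
  rw [coeff_derivative, coeff_mul, Finset.sum_congr rfl hterm, Finset.sum_const,
    Finset.Nat.card_antidiagonal, nsmul_eq_mul, coeff_mk, Nat.cast_add_one, mul_comm]

end Logarithms

section SubstX

variable {σ R : Type*} [CommRing R]

noncomputable def substX (i : σ) : R⟦X⟧ →ₐ[R] MvPowerSeries σ R :=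
  substAlgHom (HasSubst.X i)

theorem coeff_substX [DecidableEq σ] (i : σ) (f : R⟦X⟧) (d : σ →₀ ℕ) :
    MvPowerSeries.coeff d (substX i f) =
      if d = Finsupp.single i (d i) then coeff (d i) f else 0 := by
  rw [substX, coe_substAlgHom, coeff_subst_single]

theorem constantCoeff_substX (i : σ) (f : R⟦X⟧) :
    MvPowerSeries.constantCoeff (substX i f) = constantCoeff f := by
  classical
  simp [← MvPowerSeries.coeff_zero_eq_constantCoeff_apply, coeff_substX]

theorem substX_one_add_C_mul_X (i : σ) (b : R) :
    substX i (1 + C b * X) = 1 + MvPowerSeries.C b * MvPowerSeries.X i := by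
  rw [map_add, map_one, map_mul, substX, substAlgHom_X, coe_substAlgHom, subst_C]

theorem substX_mk_pow {n : ℕ} (i : Fin n) (a : R) : substX i (mk (a ^ ·)) = geom a i := by
  ext d
  rw [coeff_substX, coeff_mk]
  rfl

theorem coeff_X_mul_derivative (f : R⟦X⟧) (m : ℕ) : coeff m (X * d⁄dX R f) = m • coeff m f := by
  rcases m with _ | m
  · rw [coeff_zero_X_mul, zero_smul]
  · rw [coeff_succ_X_mul, coeff_derivative, nsmul_eq_mul, mul_comm, Nat.cast_add_one]

theorem eulerDeriv_substX (i : σ) (f : R⟦X⟧) :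
    MvPowerSeries.eulerDeriv (substX i f) = substX i (X * d⁄dX R f) := by
  classical
  ext d
  rw [MvPowerSeries.coeff_eulerDeriv, coeff_substX, coeff_substX]
  split_ifs with hd
  · rw [coeff_X_mul_derivative, hd, Finsupp.degree_single, Finsupp.single_eq_same]
  · exact smul_zero _

theorem coeff_sum_substX [Fintype σ] [DecidableEq σ] {f : R⟦X⟧} (hf : constantCoeff f = 0)
    (d : σ →₀ ℕ) :
    MvPowerSeries.coeff d (∑ i, substX i f) =
      if d.support.card = 1 then coeff d.degree f else 0 := by
  simp only [map_sum, coeff_substX]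
  split_ifs with hd
  · obtain ⟨i, hi, hdi⟩ := Finsupp.card_support_eq_one.mp hd
    rw [Finset.sum_eq_single i (fun j _ hji => if_neg ?_) (by simp), if_pos hdi, hdi,
      Finsupp.degree_single, Finsupp.single_eq_same]
    exact fun h => hi (by rw [h]; simp [hji.symm])
  · refine Finset.sum_eq_zero fun i _ => ?_
    split_ifs with hdi
    · rcases eq_or_ne (d i) 0 with h0 | h0
      · rw [h0, coeff_zero_eq_constantCoeff_apply, hf]
      · exact absurd (Finsupp.card_support_eq_one.mpr ⟨i, h0, hdi⟩) hd
    · rfl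

end SubstX

section Exp

variable {R : Type*} [CommRing R] [Algebra ℚ R] {n : ℕ}

theorem expPS_substX_of_derivative_eq_mul (i : Fin n) {f u : R⟦X⟧} (hf : constantCoeff f = 0)
    (hu : d⁄dX R u = d⁄dX R f * u) (hu0 : constantCoeff u = 1) :
    expPS (substX i f) = substX i u :=
  expPS_eq_of_eulerDeriv (by rwa [constantCoeff_substX])
    (by rw [eulerDeriv_substX, eulerDeriv_substX, hu, ← mul_assoc, map_mul])
    (by rw [constantCoeff_substX, hu0])

theorem expPS_substX_logOneAddMul (i : Fin n) (b : R) :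
    expPS (substX i (logOneAddMul b)) = 1 + MvPowerSeries.C b * MvPowerSeries.X i := by
  rw [expPS_substX_of_derivative_eq_mul i (constantCoeff_logOneAddMul b)
    (derivative_one_add_C_mul_X b) (by simp), substX_one_add_C_mul_X]

theorem expPS_substX_negLogOneSubMul (i : Fin n) (a : R) :
    expPS (substX i (negLogOneSubMul a)) = geom a i := by
  rw [expPS_substX_of_derivative_eq_mul i (constantCoeff_negLogOneSubMul a)
    (derivative_mk_pow a) (by simp [← coeff_zero_eq_constantCoeff_apply]), substX_mk_pow]

end Exp

end PowerSeries

open PowerSeries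

section Main

variable {R : Type*} [CommRing R] [Algebra ℚ R] {n : ℕ}

theorem coeff_hamSeries (x : Fin n → R) (t : R) (d : Fin n →₀ ℕ) :
    MvPowerSeries.coeff d (hamSeries x t) =
      if d.support.card = 1 then
        ((d.degree : ℚ))⁻¹ • ((1 + (-1 : R) ^ (d.degree + 1) * t ^ d.degree) * ∑ j, x j ^ d.degree)
      else 0 := rfl

theorem coeff_logOneAddMul_mul_add_negLogOneSubMul (b a : R) (m : ℕ) :
    coeff m (logOneAddMul (b * a) + negLogOneSubMul a) =
      (m : ℚ)⁻¹ • ((1 + (-1 : R) ^ (m + 1) * b ^ m) * a ^ m) := by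
  rw [map_add, logOneAddMul, negLogOneSubMul, coeff_mk, coeff_mk, ← smul_add]
  ring_nf

theorem hamSeries_eq_sum_substX (x : Fin n → R) (t : R) :
    hamSeries x t = ∑ i, ∑ j,
      (substX i (logOneAddMul (t * x j)) + substX i (negLogOneSubMul (x j))) := by
  simp_rw [← map_add, ← map_sum]
  ext d
  rw [coeff_hamSeries, coeff_sum_substX, map_sum]
  · simp only [coeff_logOneAddMul_mul_add_negLogOneSubMul, Finset.mul_sum, Finset.smul_sum]
  · rw [map_sum]
    exact Finset.sum_eq_zero fun j _ => by
      rw [map_add, constantCoeff_logOneAddMul, constantCoeff_negLogOneSubMul, add_zero]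

end Main

/-- Lemma `sumtheseries`. -/
theorem stmt6 {R : Type*} [CommRing R] [Algebra ℚ R] (n : ℕ) (x : Fin n → R) (t : R) :
    expPS (hamSeries x t)
      = ∏ i : Fin n, ∏ j : Fin n,
          (1 + MvPowerSeries.C (σ := Fin n) (R := R) (t * x j) * MvPowerSeries.X i) * geom (x j) i := by
  have hM (i j : Fin n) : MvPowerSeries.constantCoeff (substX i (logOneAddMul (t * x j))) = 0 := by
    rw [constantCoeff_substX, constantCoeff_logOneAddMul]
  have hL (i j : Fin n) : MvPowerSeries.constantCoeff (substX i (negLogOneSubMul (x j))) = 0 := by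
    rw [constantCoeff_substX, constantCoeff_negLogOneSubMul]
  have hML (i j : Fin n) : MvPowerSeries.constantCoeff
      (substX i (logOneAddMul (t * x j)) + substX i (negLogOneSubMul (x j))) = 0 := by
    rw [map_add, hM, hL, add_zero]
  rw [hamSeries_eq_sum_substX,
    expPS_sum _ _ fun i _ => by rw [map_sum]; exact Finset.sum_eq_zero fun j _ => hML i j]
  refine Finset.prod_congr rfl fun i _ => ?_
  rw [expPS_sum _ _ fun j _ => hML i j]
  refine Finset.prod_congr rfl fun j _ => ?_
  rw [expPS_add (hM i j) (hL i j), expPS_substX_logOneAddMul, expPS_substX_negLogOneSubMul]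
end

section
/- Let n ≥ 2 and work in the polynomial ring ℤ[x_1,…,x_{n−1}, y_1,…,y_{n−1}, z_1,…,z_n]. Define P̂_n = Σ_{σ ∈ S_n} sgn(σ) · Π_{ℓ=1}^{n−1} [ (Π_{k=1}^{ℓ} (1 + y_ℓ·z_{σ(k)})) · (Π_{k=ℓ+1}^{n} (1 − x_ℓ·z_{σ(k)})) ]. Then P̂_n = Π_{i=1}^{n−1} (y_i + x_i) · Π_{1≤i<j≤n−1} (x_i + y_j) · Π_{1≤i<j≤n} (z_i − z_j). -/
/-- Variable set for `ℤ[x_1,…,x_{n-1}, y_1,…,y_{n-1}, z_1,…,z_n]`. -/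
abbrev PVar (n : ℕ) := Fin (n - 1) ⊕ (Fin (n - 1) ⊕ Fin n)

/-- The variable `x_i`. -/
noncomputable def Xv {n : ℕ} (i : Fin (n - 1)) : MvPolynomial (PVar n) ℤ :=
  MvPolynomial.X (Sum.inl i)

/-- The variable `y_i`. -/
noncomputable def Yv {n : ℕ} (i : Fin (n - 1)) : MvPolynomial (PVar n) ℤ :=
  MvPolynomial.X (Sum.inr (Sum.inl i))

/-- The variable `z_i`. -/
noncomputable def Zv {n : ℕ} (i : Fin n) : MvPolynomial (PVar n) ℤ :=
  MvPolynomial.X (Sum.inr (Sum.inr i))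

/-- `P̂_n = ∑_{σ ∈ S_n} sgn(σ) ∏_{ℓ=1}^{n-1} (∏_{k=1}^{ℓ} (1 + y_ℓ z_{σ(k)}))
(∏_{k=ℓ+1}^{n} (1 - x_ℓ z_{σ(k)}))` (indices written 0-based). -/
noncomputable def Phat (n : ℕ) : MvPolynomial (PVar n) ℤ :=
  ∑ σ : Equiv.Perm (Fin n), (Equiv.Perm.sign σ : ℤ) •
    ∏ ℓ : Fin (n - 1),
      ((∏ k ∈ Finset.univ.filter (fun k : Fin n => (k : ℕ) ≤ (ℓ : ℕ)),
          (1 + Yv ℓ * Zv (σ k))) *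
        ∏ k ∈ Finset.univ.filter (fun k : Fin n => (ℓ : ℕ) < (k : ℕ)),
          (1 - Xv ℓ * Zv (σ k)))

/-!
Write `a, b` for the sequences `x, y` and `Q_k(t) = ∏_{ℓ<k} (1 + a_ℓ t) ∏_{k≤ℓ<n-1} (1 - b_ℓ t)`
(`splitPoly`). Exchanging the products over `ℓ` and `k` in each summand of `P̂_n` shows
`P̂_n = det (Q_k(-z_i))_{i,k}`, and this matrix is the Vandermonde matrix of `-z` times the
coefficient matrix of the `Q_k`, which accounts for `∏_{i<j} (z_i - z_j)`. In the coefficient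
matrix, subtracting column `k` from column `k+1` leaves the coefficients of
`Q_{k+1} - Q_k = (a_k + b_k) t Q'_k`, where `Q'` is built from `a` and the shifted sequence `b`;
expanding along the constant-term row then reduces the size by one at the cost of
`∏_k (a_k + b_k)`, so by induction the coefficient determinant is `∏_{i ≤ j} (a_i + b_j)`.
-/

open Polynomial Finset Matrix

lemma natDegree_prod_le_card {R ι : Type*} [CommSemiring R] {s : Finset ι} {f : ι → R[X]}
    (hf : ∀ i ∈ s, (f i).natDegree ≤ 1) : (∏ i ∈ s, f i).natDegree ≤ #s :=
  (natDegree_prod_le (s := s) f).trans <| by simpa using sum_le_card_nsmul s _ 1 hf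

section FinProd

variable {M : Type*} [CommMonoid M]

lemma prod_filter_val_lt_eq_prod_range {m k : ℕ} (hk : k ≤ m) (f : ℕ → M) :
    ∏ ℓ ∈ univ.filter (fun ℓ : Fin m => (ℓ : ℕ) < k), f ℓ = ∏ ℓ ∈ range k, f ℓ := by
  rw [prod_filter, Fin.prod_univ_eq_prod_range (fun ℓ => if ℓ < k then f ℓ else 1), ← prod_filter]
  congr 1
  ext ℓ
  simp only [mem_filter, mem_range]
  omega

lemma prod_filter_le_val_eq_prod_Ico (m k : ℕ) (f : ℕ → M) :
    ∏ ℓ ∈ univ.filter (fun ℓ : Fin m => k ≤ (ℓ : ℕ)), f ℓ = ∏ ℓ ∈ Ico k m, f ℓ := by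
  rw [prod_filter, Fin.prod_univ_eq_prod_range (fun ℓ => if k ≤ ℓ then f ℓ else 1), ← prod_filter]
  congr 1
  ext ℓ
  simp only [mem_filter, mem_range, mem_Ico]
  omega

lemma prod_range_prod_range_succ_eq (m : ℕ) (f : ℕ → ℕ → M) :
    ∏ j ∈ range m, ∏ i ∈ range (j + 1), f i j
      = (∏ i : Fin m, f i i) * ∏ i : Fin m, ∏ j ∈ Ioi i, f i j := by
  have hIic (j : Fin m) : ∏ i ∈ range (j + 1), f i j = ∏ i ∈ Iic j, f i j := by
    rw [Nat.range_succ_eq_Iic, ← Fin.map_valEmbedding_Iic, prod_map]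
    rfl
  rw [← Fin.prod_univ_eq_prod_range (fun j => ∏ i ∈ range (j + 1), f i j)]
  simp_rw [hIic, ← Iio_insert, prod_insert notMem_Iio_self, prod_mul_distrib]
  congr 1
  exact prod_comm' (by simp)

end FinProd

section SplitPoly

variable {R : Type*} [CommRing R]

theorem eval_matrix_eq_vandermonde_mul_coeff {N : ℕ} (v : Fin N → R) (p : Fin N → R[X])
    (hp : ∀ k, (p k).natDegree < N) :
    of (fun i k => (p k).eval (v i)) = vandermonde v * of fun j k : Fin N => (p k).coeff j := by
  ext i k
  rw [of_apply, eval_eq_sum_range' (hp k), ← Fin.sum_univ_eq_sum_range, mul_apply]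
  simp [vandermonde_apply, mul_comm]

noncomputable def splitPoly (m : ℕ) (a b : ℕ → R) (k : ℕ) : R[X] :=
  (∏ ℓ ∈ range k, (1 + C (a ℓ) * X)) * ∏ ℓ ∈ Ico k m, (1 - C (b ℓ) * X)

lemma splitPoly_natDegree_le (m : ℕ) (a b : ℕ → R) {k : ℕ} (hk : k ≤ m) :
    (splitPoly m a b k).natDegree ≤ m := by
  refine natDegree_mul_le_of_le (natDegree_prod_le_card fun ℓ _ => ?_)
    (natDegree_prod_le_card fun ℓ _ => ?_) |>.trans ?_
  · compute_degree
  · compute_degree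
  · simp only [card_range, Nat.card_Ico]
    omega

lemma splitPoly_coeff_zero (m : ℕ) (a b : ℕ → R) (k : ℕ) : (splitPoly m a b k).coeff 0 = 1 := by
  simp [splitPoly, coeff_zero_eq_eval_zero, eval_prod]

lemma splitPoly_succ_sub (m : ℕ) (a b : ℕ → R) {k : ℕ} (hk : k ≤ m) :
    splitPoly (m + 1) a b (k + 1) - splitPoly (m + 1) a b k
      = C (a k + b k) * X * splitPoly m a (fun ℓ => b (ℓ + 1)) k := by
  have hshift : ∏ ℓ ∈ Ico k m, (1 - C (b (ℓ + 1)) * X)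
      = ∏ ℓ ∈ Ico (k + 1) (m + 1), (1 - C (b ℓ) * X) := by
    rw [← map_add_right_Ico, prod_map]
    rfl
  rw [splitPoly, splitPoly, splitPoly, prod_range_succ,
    prod_eq_prod_Ico_succ_bot (show k < m + 1 by omega), hshift, map_add]
  ring

lemma splitPoly_extend_eval_neg {m k : ℕ} (hk : k ≤ m) (x y : Fin m → R) (t : R) :
    (splitPoly m (Function.extend Fin.val x 0) (Function.extend Fin.val y 0) k).eval (-t)
      = (∏ ℓ ∈ univ.filter (fun ℓ : Fin m => k ≤ (ℓ : ℕ)), (1 + y ℓ * t)) *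
        ∏ ℓ ∈ univ.filter (fun ℓ : Fin m => (ℓ : ℕ) < k), (1 - x ℓ * t) := by
  rw [splitPoly, eval_mul, eval_prod, eval_prod, mul_comm,
    ← prod_filter_val_lt_eq_prod_range hk, ← prod_filter_le_val_eq_prod_Ico]
  congr 1 <;> refine prod_congr rfl fun ℓ _ => ?_ <;>
    simp [Fin.val_injective.extend_apply, sub_eq_add_neg]

lemma det_splitPoly_coeff_succ (m : ℕ) (a b : ℕ → R) :
    det (of fun j k : Fin (m + 2) => (splitPoly (m + 1) a b k).coeff j)
      = (∏ k ∈ range (m + 1), (a k + b k)) *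
        det (of fun j k : Fin (m + 1) => (splitPoly m a (fun ℓ => b (ℓ + 1)) k).coeff j) := by
  set B : Matrix (Fin (m + 2)) (Fin (m + 2)) R := of fun j =>
    Fin.cons ((splitPoly (m + 1) a b 0).coeff j)
      fun k : Fin (m + 1) => (C (a k + b k) * X * splitPoly m a (fun ℓ => b (ℓ + 1)) k).coeff j
    with hB
  have hdiff : det (of fun j k : Fin (m + 2) => (splitPoly (m + 1) a b k).coeff j) = det B := by
    refine det_eq_of_forall_col_eq_smul_add_pred (fun _ => 1) (fun j => rfl) fun j k => ?_
    simp only [hB, of_apply, Fin.cons_succ, Fin.val_succ, Fin.val_castSucc, one_mul]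
    rw [← splitPoly_succ_sub m a b k.is_le, coeff_sub, sub_add_cancel]
  have hexpand : det B = det (B.submatrix Fin.succ Fin.succ) := by
    rw [det_succ_row_zero, Fin.sum_univ_succ]
    simp [hB, mul_assoc, splitPoly_coeff_zero]
  have hminor : B.submatrix Fin.succ Fin.succ = of fun j k : Fin (m + 1) =>
      (a k + b k) * (splitPoly m a (fun ℓ => b (ℓ + 1)) k).coeff j := by
    ext j k
    simp only [hB, submatrix_apply, of_apply, Fin.cons_succ, Fin.val_succ, mul_assoc,
      coeff_C_mul, coeff_X_mul]
  rw [hdiff, hexpand, hminor, ← Fin.prod_univ_eq_prod_range (fun k => a k + b k)]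
  exact det_mul_row _ _

theorem det_splitPoly_coeff (N : ℕ) (a b : ℕ → R) :
    det (of fun j k : Fin N => (splitPoly (N - 1) a b k).coeff j)
      = ∏ j ∈ range (N - 1), ∏ i ∈ range (j + 1), (a i + b j) := by
  induction N generalizing b with
  | zero => simp
  | succ N ih =>
    obtain _ | m := N
    · simp [splitPoly_coeff_zero]
    simp only [Nat.add_sub_cancel] at ih ⊢
    rw [det_splitPoly_coeff_succ, ih,
      prod_congr rfl fun j _ => prod_range_succ (fun i => a i + b j) j, prod_mul_distrib,
      prod_range_succ' (fun j => ∏ i ∈ range j, (a i + b j))]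
    simp [mul_comm]

end SplitPoly

lemma Phat_eq_det (n : ℕ) :
    Phat n = det (of fun i k : Fin n =>
      (splitPoly (n - 1) (Function.extend Fin.val Xv 0) (Function.extend Fin.val Yv 0) k).eval
        (-Zv i)) := by
  rw [det_apply, Phat]
  refine sum_congr rfl fun σ _ => ?_
  rw [Units.smul_def]
  congr 1
  simp only [of_apply, splitPoly_extend_eval_neg (Nat.le_sub_one_of_lt (Fin.is_lt _)),
    prod_mul_distrib]
  congr 1 <;> exact prod_comm' (by simp)

theorem stmt7_general (n : ℕ) :
    Phat n
      = (∏ i : Fin (n - 1), (Yv i + Xv i)) *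
        (∏ i : Fin (n - 1), ∏ j ∈ Finset.univ.filter (fun j => i < j), (Xv i + Yv j)) *
        ∏ i : Fin n, ∏ j ∈ Finset.univ.filter (fun j => i < j), (Zv i - Zv j) := by
  have hdeg (k : Fin n) : (splitPoly (n - 1) (Function.extend Fin.val (Xv (n := n)) 0)
      (Function.extend Fin.val Yv 0) k).natDegree < n :=
    (splitPoly_natDegree_le _ _ _ (Nat.le_sub_one_of_lt k.is_lt)).trans_lt
      (Nat.sub_one_lt_of_lt k.is_lt)
  rw [Phat_eq_det, eval_matrix_eq_vandermonde_mul_coeff _ _ hdeg, det_mul, det_vandermonde,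
    det_splitPoly_coeff, prod_range_prod_range_succ_eq]
  simp only [Fin.val_injective.extend_apply, neg_sub_neg, filter_lt_eq_Ioi, add_comm (Yv _)]
  ring

/-- the evaluation of `P̂_n` (Lemma `divislemma`). -/
theorem stmt7 (n : ℕ) (hn : 2 ≤ n) :
    Phat n
      = (∏ i : Fin (n - 1), (Yv i + Xv i)) *
        (∏ i : Fin (n - 1), ∏ j ∈ Finset.univ.filter (fun j => i < j), (Xv i + Yv j)) *
        ∏ i : Fin n, ∏ j ∈ Finset.univ.filter (fun j => i < j), (Zv i - Zv j) :=
  stmt7_general n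
end

section
/- Let n ≥ 2 and work in the polynomial ring ℤ[x_1,…,x_{n−1}, t_1,…,t_{n−1}, z_1,…,z_n]. Define P_n = Σ_{σ ∈ S_n} sgn(σ) · Π_{ℓ=1}^{n−1} [ (Π_{k=1}^{ℓ} (1 + t_ℓ·x_ℓ·z_{σ(k)})) · (Π_{k=ℓ+1}^{n} (1 − x_ℓ·z_{σ(k)})) ]. Then P_n = x_1⋯x_{n−1} · Π_{i=1}^{n−1} (1 + t_i) · Π_{1≤i<j≤n−1} (x_i + t_j·x_j) · Π_{1≤i<j≤n} (z_i − z_j). (Corollary to the lemma evaluating P̂_n, obtained by the substitution y_i = t_i x_i.) -/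
/-- The variable `t_i`. -/
noncomputable def Tv {n : ℕ} (i : Fin (n - 1)) : MvPolynomial (PVar n) ℤ :=
  MvPolynomial.X (Sum.inr (Sum.inl i))

/-- `P_n = ∑_{σ ∈ S_n} sgn(σ) ∏_{ℓ=1}^{n-1} (∏_{k=1}^{ℓ} (1 + t_ℓ x_ℓ z_{σ(k)}))
(∏_{k=ℓ+1}^{n} (1 - x_ℓ z_{σ(k)}))` (indices written 0-based). -/
noncomputable def Ppoly (n : ℕ) : MvPolynomial (PVar n) ℤ :=
  ∑ σ : Equiv.Perm (Fin n), (Equiv.Perm.sign σ : ℤ) •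
    ∏ ℓ : Fin (n - 1),
      ((∏ k ∈ Finset.univ.filter (fun k : Fin n => (k : ℕ) ≤ (ℓ : ℕ)),
          (1 + Tv ℓ * Xv ℓ * Zv (σ k))) *
        ∏ k ∈ Finset.univ.filter (fun k : Fin n => (ℓ : ℕ) < (k : ℕ)),
          (1 - Xv ℓ * Zv (σ k)))


section Proof8

open Finset Polynomial Matrix

section Aux
variable {K : Type*} [Field K] {m : ℕ} (a b : Fin m → K)

/-- The homogenized row polynomial. -/
noncomputable def Qp (i : Fin (m + 1)) : Polynomial K :=
  (∏ ℓ ∈ univ.filter (fun ℓ : Fin m => (i : ℕ) ≤ (ℓ : ℕ)), (X + C (b ℓ * a ℓ))) *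
    ∏ ℓ ∈ univ.filter (fun ℓ : Fin m => (ℓ : ℕ) < (i : ℕ)), (X - C (a ℓ))

lemma card_filters (i : Fin (m + 1)) :
    (univ.filter (fun ℓ : Fin m => (i : ℕ) ≤ (ℓ : ℕ))).card +
      (univ.filter (fun ℓ : Fin m => (ℓ : ℕ) < (i : ℕ))).card = m := by
  have := Finset.card_filter_add_card_filter_not
    (s := (univ : Finset (Fin m))) (p := fun ℓ : Fin m => (i : ℕ) ≤ (ℓ : ℕ))
  simpa [not_le] using this

lemma Qp_natDegree_le (i : Fin (m + 1)) : (Qp a b i).natDegree ≤ m := by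
  refine le_trans (natDegree_mul_le) ?_
  have h1 := natDegree_prod_le (univ.filter (fun ℓ : Fin m => (i : ℕ) ≤ (ℓ : ℕ)))
    (fun ℓ => (X + C (b ℓ * a ℓ)))
  have h2 := natDegree_prod_le (univ.filter (fun ℓ : Fin m => (ℓ : ℕ) < (i : ℕ)))
    (fun ℓ => (X - C (a ℓ)))
  simp only [natDegree_X_add_C, natDegree_X_sub_C, Finset.sum_const, smul_eq_mul, mul_one] at h1 h2
  calc _ ≤ _ + _ := Nat.add_le_add h1 h2
  _ = m := card_filters i
end Aux

section Aux2
variable {K : Type*} [Field K] {m : ℕ} (a b : Fin m → K)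

lemma Qp_rev_eval (i : Fin (m + 1)) {v : K} (hv : v ≠ 0) :
    ∑ k : Fin (m + 1), (Qp a b i).coeff k * v ^ (m - (k : ℕ)) =
      (∏ ℓ ∈ univ.filter (fun ℓ : Fin m => (i : ℕ) ≤ (ℓ : ℕ)), (1 + b ℓ * a ℓ * v)) *
        ∏ ℓ ∈ univ.filter (fun ℓ : Fin m => (ℓ : ℕ) < (i : ℕ)), (1 - a ℓ * v) := by
  have hd : (Qp a b i).natDegree < m + 1 := Nat.lt_succ_of_le (Qp_natDegree_le a b i)
  have hsum : ∑ k : Fin (m + 1), (Qp a b i).coeff k * v ^ (m - (k : ℕ))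
      = v ^ m * Polynomial.eval v⁻¹ (Qp a b i) := by
    rw [eval_eq_sum_range' hd, Finset.mul_sum, ← Fin.sum_univ_eq_sum_range]
    refine Finset.sum_congr rfl fun k _ => ?_
    have hk : (k : ℕ) ≤ m := Nat.lt_succ_iff.mp k.isLt
    rw [pow_sub₀ v hv hk, ← inv_pow]
    ring
  rw [hsum, Qp, eval_mul, eval_prod, eval_prod]
  simp only [eval_add, eval_sub, eval_X, eval_C]
  rw [show v ^ m = (∏ _ℓ ∈ univ.filter (fun ℓ : Fin m => (i : ℕ) ≤ (ℓ : ℕ)), v) *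
        ∏ _ℓ ∈ univ.filter (fun ℓ : Fin m => (ℓ : ℕ) < (i : ℕ)), v by
      rw [Finset.prod_const, Finset.prod_const, ← pow_add, card_filters]]
  rw [mul_mul_mul_comm, ← Finset.prod_mul_distrib, ← Finset.prod_mul_distrib]
  congr 1 <;> refine Finset.prod_congr rfl fun ℓ _ => ?_
  · rw [mul_add, mul_inv_cancel₀ hv]; ring
  · rw [mul_sub, mul_inv_cancel₀ hv]; ring

/-- coefficient matrix of the `Qp`. -/
noncomputable def Amat : Matrix (Fin (m + 1)) (Fin (m + 1)) K :=
  Matrix.of fun i k => (Qp a b i).coeff k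

lemma det_eval (v : Fin (m + 1) → K) :
    det (Matrix.of fun i j => (Qp a b i).eval (v j)) =
      det (Amat a b) * ∏ i, ∏ j ∈ Ioi i, (v j - v i) := by
  have h : (Matrix.of fun i j => (Qp a b i).eval (v j))
      = Amat a b * (vandermonde v)ᵀ := by
    ext i j
    rw [Matrix.mul_apply, Matrix.of_apply,
      eval_eq_sum_range' (Nat.lt_succ_of_le (Qp_natDegree_le a b i)),
      ← Fin.sum_univ_eq_sum_range]
    simp [Amat, vandermonde_apply]
  rw [h, det_mul, det_transpose, det_vandermonde]
end Aux2

lemma prod_Ioi_rev {K : Type*} [CommRing K] {N : ℕ} (f : Fin N → Fin N → K) :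
    (∏ i : Fin N, ∏ j ∈ Ioi i, f j.rev i.rev) = ∏ i : Fin N, ∏ j ∈ Ioi i, f i j := by
  rw [Finset.prod_sigma', Finset.prod_sigma']
  refine Finset.prod_nbij' (fun p => ⟨p.2.rev, p.1.rev⟩) (fun p => ⟨p.2.rev, p.1.rev⟩)
    ?_ ?_ ?_ ?_ ?_
  · rintro ⟨i, j⟩ h
    simp only [Finset.mem_sigma, Finset.mem_univ, Finset.mem_Ioi, true_and] at h ⊢
    exact Fin.rev_lt_rev.mpr h
  · rintro ⟨i, j⟩ h
    simp only [Finset.mem_sigma, Finset.mem_univ, Finset.mem_Ioi, true_and] at h ⊢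
    exact Fin.rev_lt_rev.mpr h
  · rintro ⟨i, j⟩ _; simp [Fin.rev_rev]
  · rintro ⟨i, j⟩ _; simp [Fin.rev_rev]
  · rintro ⟨i, j⟩ _; simp

section Aux3
variable {K : Type*} [Field K] {m : ℕ} (a b : Fin m → K)

lemma det_rev_eval (v : Fin (m + 1) → K) :
    det (Matrix.of fun i j => ∑ k : Fin (m + 1), (Qp a b i).coeff k * v j ^ (m - (k : ℕ))) =
      det (Amat a b) * ∏ i, ∏ j ∈ Ioi i, (v i - v j) := by
  have h : (Matrix.of fun i j => ∑ k : Fin (m + 1), (Qp a b i).coeff k * v j ^ (m - (k : ℕ)))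
      = Amat a b * ((vandermonde v).submatrix id ⇑(Fin.revPerm : Equiv.Perm (Fin (m + 1))))ᵀ := by
    ext i j
    rw [Matrix.mul_apply, Matrix.of_apply]
    refine Finset.sum_congr rfl fun k _ => ?_
    have : ((Fin.rev k : Fin (m + 1)) : ℕ) = m - (k : ℕ) := by
      rw [Fin.val_rev]; omega
    simp [Amat, vandermonde_apply, this]
  have h2 : (vandermonde v).submatrix ⇑(Fin.revPerm : Equiv.Perm (Fin (m + 1))) id
      = vandermonde (v ∘ Fin.rev) := by
    ext i j; simp [vandermonde_apply]
  have h3 : ((Equiv.Perm.sign (Fin.revPerm : Equiv.Perm (Fin (m + 1))) : ℤ) : K) *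
      (vandermonde v).det = (vandermonde (v ∘ Fin.rev)).det := by
    rw [← h2, det_permute]
  rw [h, det_mul, det_transpose, det_permute', h3, det_vandermonde]
  congr 1
  exact prod_Ioi_rev (fun i j => v i - v j)
end Aux3

section Aux4
variable {K : Type*} [Field K] {m : ℕ} (a b : Fin m → K)

lemma filt_Ioi (i : Fin m) :
    univ.filter (fun ℓ : Fin m => (i : ℕ) < (ℓ : ℕ)) = Ioi i := by
  ext ℓ
  simp only [mem_filter, mem_univ, true_and, mem_Ioi, Fin.lt_def]

lemma Ioi_castSucc_eq (i : Fin m) :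
    Ioi (Fin.castSucc i) = insert (Fin.last m) ((Ioi i).map Fin.castSuccEmb) := by
  ext j
  constructor
  · intro hj
    rw [mem_Ioi] at hj
    rcases Fin.eq_castSucc_or_eq_last j with ⟨j', rfl⟩ | rfl
    · exact mem_insert_of_mem (mem_map_of_mem _
        (mem_Ioi.mpr (Fin.castSucc_lt_castSucc_iff.mp hj)))
    · exact mem_insert_self _ _
  · intro hj
    rcases mem_insert.mp hj with rfl | hj
    · exact mem_Ioi.mpr (Fin.castSucc_lt_last i)
    · obtain ⟨j', hj', rfl⟩ := mem_map.mp hj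
      exact mem_Ioi.mpr (Fin.castSucc_lt_castSucc_iff.mpr (mem_Ioi.mp hj'))

lemma diag_last : (Qp a b (Fin.last m)).eval 0 = ∏ ℓ : Fin m, (0 - a ℓ) := by
  rw [Qp]
  have h1 : univ.filter (fun ℓ : Fin m => ((Fin.last m : Fin (m + 1)) : ℕ) ≤ (ℓ : ℕ)) = ∅ := by
    ext ℓ; simp
  have h2 : univ.filter (fun ℓ : Fin m => (ℓ : ℕ) < ((Fin.last m : Fin (m + 1)) : ℕ)) = univ := by
    ext ℓ; simp
  rw [h1, h2]
  simp [eval_prod]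

lemma diag_main (i : Fin m) :
    (Qp a b (Fin.castSucc i)).eval (a i) =
      a i * (1 + b i) * (∏ ℓ ∈ Ioi i, (a i + b ℓ * a ℓ)) *
        ∏ ℓ ∈ univ.filter (fun ℓ : Fin m => (ℓ : ℕ) < (i : ℕ)), (a i - a ℓ) := by
  rw [Qp]
  have h1 : univ.filter (fun ℓ : Fin m => ((Fin.castSucc i : Fin (m + 1)) : ℕ) ≤ (ℓ : ℕ))
      = insert i (Ioi i) := by
    ext ℓ
    simp only [mem_filter, mem_univ, true_and, mem_insert, mem_Ioi, Fin.lt_def,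
      Fin.coe_castSucc, Fin.ext_iff]
    omega
  have h2 : (univ.filter (fun ℓ : Fin m => (ℓ : ℕ) < ((Fin.castSucc i : Fin (m + 1)) : ℕ)))
      = univ.filter (fun ℓ : Fin m => (ℓ : ℕ) < (i : ℕ)) := by
    rfl
  rw [h1, h2, Finset.prod_insert (by simp)]
  simp only [eval_mul, eval_prod, eval_add, eval_sub, eval_X, eval_C]
  ring

lemma vand_snoc :
    (∏ i : Fin (m + 1), ∏ j ∈ Ioi i, ((Fin.snoc a 0 : Fin (m + 1) → K) j -
        (Fin.snoc a 0 : Fin (m + 1) → K) i)) =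
      (∏ i : Fin m, (0 - a i)) * ∏ i : Fin m, ∏ j ∈ Ioi i, (a j - a i) := by
  rw [Fin.prod_univ_castSucc]
  have hlast : Ioi (Fin.last m) = (∅ : Finset (Fin (m + 1))) := by
    ext j; simp [Fin.le_last j, not_lt.mpr (Fin.le_last j)]
  rw [hlast, Finset.prod_empty, mul_one, ← Finset.prod_mul_distrib]
  refine Finset.prod_congr rfl fun i _ => ?_
  rw [Ioi_castSucc_eq, Finset.prod_insert (by
    simp only [mem_map, mem_Ioi, Fin.coe_castSuccEmb, not_exists, not_and]
    intro x _
    exact Fin.ne_last_of_lt (Fin.castSucc_lt_last x)), Finset.prod_map]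
  simp only [Fin.coe_castSuccEmb, Fin.snoc_castSucc, Fin.snoc_last]

lemma prod_lt_swap (f : Fin m → Fin m → K) :
    (∏ i : Fin m, ∏ ℓ ∈ univ.filter (fun ℓ : Fin m => (ℓ : ℕ) < (i : ℕ)), f i ℓ) =
      ∏ i : Fin m, ∏ j ∈ Ioi i, f j i := by
  have hfilt : ∀ i : Fin m, univ.filter (fun ℓ : Fin m => (ℓ : ℕ) < (i : ℕ)) = Iio i := by
    intro i; ext ℓ
    simp only [mem_filter, mem_univ, true_and, mem_Iio, Fin.lt_def]
  simp only [hfilt]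
  rw [Finset.prod_sigma', Finset.prod_sigma']
  refine Finset.prod_nbij' (fun p => ⟨p.2, p.1⟩) (fun p => ⟨p.2, p.1⟩) ?_ ?_ ?_ ?_ ?_
  · rintro ⟨i, j⟩ h
    simp only [Finset.mem_sigma, Finset.mem_univ, Finset.mem_Ioi, Finset.mem_Iio, true_and] at h ⊢
    exact h
  · rintro ⟨i, j⟩ h
    simp only [Finset.mem_sigma, Finset.mem_univ, Finset.mem_Ioi, Finset.mem_Iio, true_and] at h ⊢
    exact h
  · rintro ⟨i, j⟩ _; rfl
  · rintro ⟨i, j⟩ _; rfl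
  · rintro ⟨i, j⟩ _; rfl

lemma det_Amat (ha : ∀ i, a i ≠ 0) (hinj : Function.Injective a) :
    det (Amat a b) =
      (∏ i, a i) * (∏ i, (1 + b i)) * ∏ i : Fin m, ∏ j ∈ Ioi i, (a i + b j * a j) := by
  set u : Fin (m + 1) → K := Fin.snoc a 0 with hu
  have hune : ∀ i j : Fin (m + 1), i < j → u j - u i ≠ 0 := by
    intro i j hij
    rcases eq_or_ne j (Fin.last m) with rfl | hjl
    · obtain ⟨i', rfl⟩ : ∃ i', i = Fin.castSucc i' :=
        (Fin.eq_castSucc_or_eq_last i).resolve_right (Fin.ne_last_of_lt hij)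
      rw [hu]
      simp only [Fin.snoc_last, Fin.snoc_castSucc]
      exact sub_ne_zero.mpr (Ne.symm (by simpa using ha i'))
    · obtain ⟨j', rfl⟩ : ∃ j', j = Fin.castSucc j' :=
        (Fin.eq_castSucc_or_eq_last j).resolve_right hjl
      obtain ⟨i', rfl⟩ : ∃ i', i = Fin.castSucc i' :=
        (Fin.eq_castSucc_or_eq_last i).resolve_right
          (Fin.ne_last_of_lt (lt_trans hij (Fin.castSucc_lt_last j')))
      rw [hu]
      simp only [Fin.snoc_castSucc]
      refine sub_ne_zero.mpr fun h => ?_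
      rw [hinj h] at hij
      exact lt_irrefl _ hij
  have hvand : (∏ i : Fin (m + 1), ∏ j ∈ Ioi i, (u j - u i)) ≠ 0 := by
    rw [Finset.prod_ne_zero_iff]
    intro i _
    rw [Finset.prod_ne_zero_iff]
    intro j hj
    exact hune i j (mem_Ioi.mp hj)
  apply mul_right_cancel₀ hvand
  rw [← det_eval a b u]
  have htri : (Matrix.of fun i j => (Qp a b i).eval (u j)).BlockTriangular id := by
    intro i j hij
    have hjm : (j : ℕ) < m := lt_of_lt_of_le hij (Nat.lt_succ_iff.mp i.isLt)
    have hj : j = Fin.castSucc ⟨(j : ℕ), hjm⟩ := by ext; simp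
    rw [Matrix.of_apply, hj, hu, Fin.snoc_castSucc, Qp]
    simp only [eval_mul, eval_prod, eval_sub, eval_X, eval_C]
    apply mul_eq_zero_of_right
    refine Finset.prod_eq_zero (i := (⟨(j : ℕ), hjm⟩ : Fin m)) ?_ (sub_self _)
    simp only [Finset.mem_filter, Finset.mem_univ, true_and]
    exact hij
  rw [det_of_upperTriangular htri]
  calc (∏ i : Fin (m + 1), (Matrix.of fun i j => (Qp a b i).eval (u j)) i i)
      = (∏ i : Fin m, (Qp a b (Fin.castSucc i)).eval (a i)) * (Qp a b (Fin.last m)).eval 0 := by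
        rw [Fin.prod_univ_castSucc]
        simp only [Matrix.of_apply, hu, Fin.snoc_castSucc, Fin.snoc_last]
    _ = (∏ i : Fin m, (a i * (1 + b i) * (∏ ℓ ∈ Ioi i, (a i + b ℓ * a ℓ)) *
          ∏ ℓ ∈ univ.filter (fun ℓ : Fin m => (ℓ : ℕ) < (i : ℕ)), (a i - a ℓ))) *
          ∏ ℓ : Fin m, (0 - a ℓ) := by
        rw [diag_last]
        exact congrArg (· * _) (Finset.prod_congr rfl fun i _ => diag_main a b i)
    _ = ((∏ i, a i) * (∏ i, (1 + b i)) * ∏ i : Fin m, ∏ j ∈ Ioi i, (a i + b j * a j)) *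
          ∏ i : Fin (m + 1), ∏ j ∈ Ioi i, (u j - u i) := by
        rw [hu, vand_snoc]
        simp only [Finset.prod_mul_distrib]
        rw [prod_lt_swap (f := fun i ℓ => a i - a ℓ)]
        ring
end Aux4

section Aux5
variable {K : Type*} [Field K] {m : ℕ} (a b : Fin m → K)

lemma det_final (c : Fin (m + 1) → K) (hc : ∀ j, c j ≠ 0)
    (ha : ∀ i, a i ≠ 0) (hinj : Function.Injective a) :
    det (Matrix.of fun i j : Fin (m + 1) =>
        (∏ ℓ ∈ univ.filter (fun ℓ : Fin m => (i : ℕ) ≤ (ℓ : ℕ)), (1 + b ℓ * a ℓ * c j)) *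
          ∏ ℓ ∈ univ.filter (fun ℓ : Fin m => (ℓ : ℕ) < (i : ℕ)), (1 - a ℓ * c j)) =
      (∏ i, a i) * (∏ i, (1 + b i)) *
        (∏ i : Fin m, ∏ j ∈ Ioi i, (a i + b j * a j)) *
        ∏ i : Fin (m + 1), ∏ j ∈ Ioi i, (c i - c j) := by
  have h : (Matrix.of fun i j : Fin (m + 1) =>
        (∏ ℓ ∈ univ.filter (fun ℓ : Fin m => (i : ℕ) ≤ (ℓ : ℕ)), (1 + b ℓ * a ℓ * c j)) *
          ∏ ℓ ∈ univ.filter (fun ℓ : Fin m => (ℓ : ℕ) < (i : ℕ)), (1 - a ℓ * c j))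
      = Matrix.of fun i j => ∑ k : Fin (m + 1), (Qp a b i).coeff k * c j ^ (m - (k : ℕ)) := by
    ext i j
    rw [Matrix.of_apply, Matrix.of_apply, Qp_rev_eval a b i (hc j)]
  rw [h, det_rev_eval, det_Amat a b ha hinj]
end Aux5

lemma Ppoly_det (n : ℕ) :
    Ppoly n = Matrix.det (Matrix.of fun k j : Fin n =>
      (∏ ℓ ∈ univ.filter (fun ℓ : Fin (n - 1) => (k : ℕ) ≤ (ℓ : ℕ)), (1 + Tv ℓ * Xv ℓ * Zv j)) *
        ∏ ℓ ∈ univ.filter (fun ℓ : Fin (n - 1) => (ℓ : ℕ) < (k : ℕ)), (1 - Xv ℓ * Zv j))ᵀ := by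
  rw [Matrix.det_apply]
  simp only [Ppoly]
  refine Finset.sum_congr rfl fun σ _ => ?_
  rw [Units.smul_def]
  congr 1
  have c1 : (∏ ℓ : Fin (n - 1), ∏ k ∈ univ.filter (fun k : Fin n => (k : ℕ) ≤ (ℓ : ℕ)),
        (1 + Tv ℓ * Xv ℓ * Zv (σ k)))
      = ∏ k : Fin n, ∏ ℓ ∈ univ.filter (fun ℓ : Fin (n - 1) => (k : ℕ) ≤ (ℓ : ℕ)),
        (1 + Tv ℓ * Xv ℓ * Zv (σ k)) :=
    Finset.prod_comm' (fun x y => by simp)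
  have c2 : (∏ ℓ : Fin (n - 1), ∏ k ∈ univ.filter (fun k : Fin n => (ℓ : ℕ) < (k : ℕ)),
        (1 - Xv ℓ * Zv (σ k)))
      = ∏ k : Fin n, ∏ ℓ ∈ univ.filter (fun ℓ : Fin (n - 1) => (ℓ : ℕ) < (k : ℕ)),
        (1 - Xv ℓ * Zv (σ k)) :=
    Finset.prod_comm' (fun x y => by simp)
  rw [Finset.prod_mul_distrib, c1, c2, ← Finset.prod_mul_distrib]
  rfl

theorem stmt8' (m : ℕ) :
    Ppoly (m + 1)
      = (∏ i : Fin m, Xv (n := m + 1) i) * (∏ i : Fin m, (1 + Tv (n := m + 1) i)) *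
        (∏ i : Fin m, ∏ j ∈ Finset.univ.filter (fun j => i < j),
          (Xv (n := m + 1) i + Tv (n := m + 1) j * Xv (n := m + 1) j)) *
        ∏ i : Fin (m + 1), ∏ j ∈ Finset.univ.filter (fun j => i < j),
          (Zv (n := m + 1) i - Zv (n := m + 1) j) := by
  classical
  set K := FractionRing (MvPolynomial (PVar (m + 1)) ℤ) with hK
  let ι : MvPolynomial (PVar (m + 1)) ℤ →+* K := algebraMap _ K
  have hι : Function.Injective ι := IsFractionRing.injective _ _
  have hXne : ∀ i : Fin m, ι (Xv (n := m + 1) i) ≠ 0 := fun i =>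
    (map_ne_zero_iff ι hι).mpr (MvPolynomial.X_ne_zero _)
  have hZne : ∀ j : Fin (m + 1), ι (Zv (n := m + 1) j) ≠ 0 := fun j =>
    (map_ne_zero_iff ι hι).mpr (MvPolynomial.X_ne_zero _)
  have hinj : Function.Injective (fun i : Fin m => ι (Xv (n := m + 1) i)) := by
    intro i j h
    have h2 : (Sum.inl i : PVar (m + 1)) = Sum.inl j :=
      MvPolynomial.X_injective (hι h)
    exact Sum.inl_injective h2
  apply hι
  have key := det_final (fun i : Fin m => ι (Xv (n := m + 1) i))
    (fun i : Fin m => ι (Tv (n := m + 1) i))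
    (fun j : Fin (m + 1) => ι (Zv (n := m + 1) j)) hZne hXne hinj
  have hfI : ∀ {N : ℕ} (i : Fin N), Finset.univ.filter (fun j => i < j) = Ioi i := by
    intro N i; ext j; simp only [mem_filter, mem_univ, true_and, mem_Ioi]
  have hMeq : (Matrix.of fun k j : Fin (m + 1) =>
      (∏ ℓ ∈ univ.filter (fun ℓ : Fin (m + 1 - 1) => (k : ℕ) ≤ (ℓ : ℕ)),
          (1 + Tv ℓ * Xv ℓ * Zv j)) *
        ∏ ℓ ∈ univ.filter (fun ℓ : Fin (m + 1 - 1) => (ℓ : ℕ) < (k : ℕ)),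
          (1 - Xv ℓ * Zv j)).map ι
      = Matrix.of fun i j : Fin (m + 1) =>
        (∏ ℓ ∈ univ.filter (fun ℓ : Fin m => (i : ℕ) ≤ (ℓ : ℕ)),
            (1 + ι (Tv (n := m + 1) ℓ) * ι (Xv (n := m + 1) ℓ) * ι (Zv (n := m + 1) j))) *
          ∏ ℓ ∈ univ.filter (fun ℓ : Fin m => (ℓ : ℕ) < (i : ℕ)),
            (1 - ι (Xv (n := m + 1) ℓ) * ι (Zv (n := m + 1) j)) := by
    ext i j
    simp only [Matrix.map_apply, Matrix.of_apply, _root_.map_mul, map_prod, _root_.map_add,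
      _root_.map_one, _root_.map_sub]
    rfl
  rw [Ppoly_det (m + 1), RingHom.map_det, RingHom.mapMatrix_apply, Matrix.transpose_map, Matrix.det_transpose, hMeq, key]
  simp only [_root_.map_mul, map_prod, _root_.map_add, _root_.map_one, _root_.map_sub, hfI]


end Proof8


/-- the evaluation of `P_n` (Corollary to Lemma `divislemma`). -/
theorem stmt8 (n : ℕ) (hn : 2 ≤ n) :
    Ppoly n
      = (∏ i : Fin (n - 1), Xv i) * (∏ i : Fin (n - 1), (1 + Tv i)) *
        (∏ i : Fin (n - 1), ∏ j ∈ Finset.univ.filter (fun j => i < j),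
          (Xv i + Tv j * Xv j)) *
        ∏ i : Fin n, ∏ j ∈ Finset.univ.filter (fun j => i < j), (Zv i - Zv j) := by
  obtain ⟨m, rfl⟩ : ∃ m, n = m + 1 := ⟨n - 1, by omega⟩
  exact stmt8' m
end

section
/- Let n ≥ 2 and let P̂_n ∈ ℤ[x_1,…,x_{n−1}, y_1,…,y_{n−1}, z_1,…,z_n] be defined by P̂_n = Σ_{σ ∈ S_n} sgn(σ) · Π_{ℓ=1}^{n−1} [ (Π_{k=1}^{ℓ} (1 + y_ℓ·z_{σ(k)})) · (Π_{k=ℓ+1}^{n} (1 − x_ℓ·z_{σ(k)})) ]. Then for every i with 1 ≤ i ≤ n−1, substituting y_i = −x_i makes P̂_n vanish; equivalently, x_i + y_i divides P̂_n in this polynomial ring. -/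
open Finset

/-- product over a set closed under a swap is invariant under precomposing with that swap. -/
lemma prod_swap_inv {α M : Type*} [DecidableEq α] [CommMonoid M] (s : Finset α) (a b : α)
    (h : a ∈ s ↔ b ∈ s) (f : α → M) :
    ∏ k ∈ s, f (Equiv.swap a b k) = ∏ k ∈ s, f k := by
  by_cases ha : a ∈ s
  · have hb : b ∈ s := h.mp ha
    have hmem : ∀ k ∈ s, Equiv.swap a b k ∈ s := by
      intro k hk
      rcases eq_or_ne k a with rfl | hka
      · simpa [Equiv.swap_apply_left] using hb
      rcases eq_or_ne k b with rfl | hkb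
      · simpa [Equiv.swap_apply_right] using ha
      · simpa [Equiv.swap_apply_of_ne_of_ne hka hkb] using hk
    exact Finset.prod_nbij' (fun k => Equiv.swap a b k) (fun k => Equiv.swap a b k)
      hmem hmem (fun k _ => Equiv.swap_apply_self a b k) (fun k _ => Equiv.swap_apply_self a b k)
      (fun k _ => rfl)
  · have hb : b ∉ s := fun hb => ha (h.mpr hb)
    refine Finset.prod_congr rfl fun k hk => ?_
    have hka : k ≠ a := fun h' => ha (h' ▸ hk)
    have hkb : k ≠ b := fun h' => hb (h' ▸ hk)
    rw [Equiv.swap_apply_of_ne_of_ne hka hkb]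

lemma dvd_sub_subst {n : ℕ} (i : Fin (n - 1)) (f : MvPolynomial (PVar n) ℤ) :
    (Xv i + Yv i) ∣
      (f - MvPolynomial.aeval
        (fun v : PVar n =>
          if v = Sum.inr (Sum.inl i) then -Xv i else MvPolynomial.X v) f) := by
  set φ : PVar n → MvPolynomial (PVar n) ℤ :=
    fun v => if v = Sum.inr (Sum.inl i) then -Xv i else MvPolynomial.X v with hφ
  induction f using MvPolynomial.induction_on with
  | C a => simp
  | add p q hp hq =>
      have := dvd_add hp hq
      convert this using 1
      rw [map_add]; ring
  | mul_X p v hp =>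
      rw [map_mul, MvPolynomial.aeval_X]
      have hsplit : p * MvPolynomial.X v - MvPolynomial.aeval φ p * φ v =
          (p - MvPolynomial.aeval φ p) * MvPolynomial.X v +
            MvPolynomial.aeval φ p * (MvPolynomial.X v - φ v) := by ring
      rw [hsplit]
      refine dvd_add (hp.mul_right _) (Dvd.dvd.mul_left ?_ _)
      by_cases hv : v = Sum.inr (Sum.inl i)
      · subst hv
        have : (MvPolynomial.X (Sum.inr (Sum.inl i) : PVar n) - φ (Sum.inr (Sum.inl i)))
            = Xv i + Yv i := by
          simp [hφ, Xv, Yv]; ring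
        rw [this]
      · simp [hφ, hv]

/-- substituting `y_i = -x_i` makes `P̂_n` vanish; equivalently
`x_i + y_i` divides `P̂_n`. -/
theorem stmt11 (n : ℕ) (hn : 2 ≤ n) (i : Fin (n - 1)) :
    (MvPolynomial.aeval
        (fun v : PVar n =>
          if v = Sum.inr (Sum.inl i) then -Xv i else MvPolynomial.X v)
        (Phat n) = 0) ∧
    (Xv i + Yv i) ∣ Phat n := by
  classical
  set φ : PVar n → MvPolynomial (PVar n) ℤ :=
    fun v => if v = Sum.inr (Sum.inl i) then -Xv i else MvPolynomial.X v with hφ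
  have hi1 : (i : ℕ) + 1 < n := by have := i.isLt; omega
  set a : Fin n := ⟨(i : ℕ), by omega⟩ with ha'
  set b : Fin n := ⟨(i : ℕ) + 1, hi1⟩ with hb'
  have hab : a ≠ b := by simp [ha', hb', Fin.ext_iff]
  set G : Equiv.Perm (Fin n) → MvPolynomial (PVar n) ℤ := fun σ =>
    ∏ ℓ : Fin (n - 1),
      ((∏ k ∈ Finset.univ.filter (fun k : Fin n => (k : ℕ) ≤ (ℓ : ℕ)),
          (1 + (if ℓ = i then -Xv i else Yv ℓ) * Zv (σ k))) *
        ∏ k ∈ Finset.univ.filter (fun k : Fin n => (ℓ : ℕ) < (k : ℕ)),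
          (1 - Xv ℓ * Zv (σ k))) with hG
  have step1 : MvPolynomial.aeval φ (Phat n) =
      ∑ σ : Equiv.Perm (Fin n), (Equiv.Perm.sign σ : ℤ) • G σ := by
    rw [Phat, map_sum]
    refine Finset.sum_congr rfl fun σ _ => ?_
    rw [map_zsmul, hG]
    congr 1
    rw [map_prod]
    refine Finset.prod_congr rfl fun ℓ _ => ?_
    rw [map_mul, map_prod, map_prod]
    congr 1
    · refine Finset.prod_congr rfl fun k _ => ?_
      by_cases hℓ : ℓ = i <;>
        simp [hℓ, Xv, Yv, Zv, hφ]
    · refine Finset.prod_congr rfl fun k _ => ?_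
      simp [Xv, Zv, hφ]
  have Ginv : ∀ σ : Equiv.Perm (Fin n), G (σ * Equiv.swap a b) = G σ := by
    intro σ
    rw [hG]
    refine Finset.prod_congr rfl fun ℓ _ => ?_
    by_cases hℓ : ℓ = i
    · subst hℓ
      rw [if_pos rfl]
      have hsplit : ∀ τ : Equiv.Perm (Fin n),
          (∏ k ∈ Finset.univ.filter (fun k : Fin n => (k : ℕ) ≤ (ℓ : ℕ)),
            (1 + (-Xv ℓ) * Zv (τ k))) *
          (∏ k ∈ Finset.univ.filter (fun k : Fin n => (ℓ : ℕ) < (k : ℕ)),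
            (1 - Xv ℓ * Zv (τ k))) = ∏ k : Fin n, (1 - Xv ℓ * Zv k) := by
        intro τ
        have h1 : ∀ k : Fin n, (1 + (-Xv ℓ) * Zv (τ k)) = (1 - Xv ℓ * Zv (τ k)) :=
          fun k => by ring
        simp only [h1]
        have hfe : Finset.univ.filter (fun k : Fin n => (ℓ : ℕ) < (k : ℕ)) =
            Finset.univ.filter (fun k : Fin n => ¬ ((k : ℕ) ≤ (ℓ : ℕ))) := by
          apply Finset.filter_congr; intro x _; simp [not_le]
        rw [hfe, Finset.prod_filter_mul_prod_filter_not]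
        exact Equiv.prod_comp τ (fun k => 1 - Xv ℓ * Zv k)
      rw [hsplit, hsplit]
    · rw [if_neg hℓ]
      have hne : (ℓ : ℕ) ≠ (i : ℕ) := fun h => hℓ (Fin.ext h)
      congr 1
      · have hiff : a ∈ Finset.univ.filter (fun k : Fin n => (k : ℕ) ≤ (ℓ : ℕ)) ↔
            b ∈ Finset.univ.filter (fun k : Fin n => (k : ℕ) ≤ (ℓ : ℕ)) := by
          simp only [Finset.mem_filter, Finset.mem_univ, true_and, ha', hb']
          omega
        have := prod_swap_inv
          (Finset.univ.filter (fun k : Fin n => (k : ℕ) ≤ (ℓ : ℕ))) a b hiff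
          (fun k => 1 + Yv ℓ * Zv (σ k))
        simpa [Equiv.Perm.mul_apply] using this
      · have hiff : a ∈ Finset.univ.filter (fun k : Fin n => (ℓ : ℕ) < (k : ℕ)) ↔
            b ∈ Finset.univ.filter (fun k : Fin n => (ℓ : ℕ) < (k : ℕ)) := by
          simp only [Finset.mem_filter, Finset.mem_univ, true_and, ha', hb']
          omega
        have := prod_swap_inv
          (Finset.univ.filter (fun k : Fin n => (ℓ : ℕ) < (k : ℕ))) a b hiff
          (fun k => 1 - Xv ℓ * Zv (σ k))
        simpa [Equiv.Perm.mul_apply] using this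
  have h0 : MvPolynomial.aeval φ (Phat n) = 0 := by
    rw [step1]
    refine Finset.sum_ninvolution (fun σ => σ * Equiv.swap a b) ?_ ?_
      (fun σ => Finset.mem_univ _) ?_
    · intro σ
      rw [Ginv σ, ← add_smul]
      convert zero_smul ℤ (G σ)
      rw [Equiv.Perm.sign_mul, Equiv.Perm.sign_swap hab]
      simp
    · intro σ _ h
      have h' : Equiv.swap a b = 1 := by
        have := congrArg (fun τ => σ⁻¹ * τ) h
        simpa [← mul_assoc] using this
      exact hab (Equiv.swap_eq_one_iff.mp h')
    · intro σ
      show σ * Equiv.swap a b * Equiv.swap a b = σ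
      rw [mul_assoc, Equiv.swap_mul_self, mul_one]
  refine ⟨h0, ?_⟩
  have := dvd_sub_subst i (Phat n)
  rwa [← hφ, h0, sub_zero] at this
end

section
/- Let n ≥ 2 and let P̂_n ∈ ℤ[x_1,…,x_{n−1}, y_1,…,y_{n−1}, z_1,…,z_n] be defined by P̂_n = Σ_{σ ∈ S_n} sgn(σ) · Π_{ℓ=1}^{n−1} [ (Π_{k=1}^{ℓ} (1 + y_ℓ·z_{σ(k)})) · (Π_{k=ℓ+1}^{n} (1 − x_ℓ·z_{σ(k)})) ]. Then for every pair (i,j) with 1 ≤ i < j ≤ n−1, the binomial x_i + y_j divides P̂_n in this polynomial ring. -/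
open MvPolynomial in
lemma aux_dvd_sub_aeval {σ : Type*} [DecidableEq σ] (v : σ) (c p : MvPolynomial σ ℤ) :
    (X v - c) ∣ p - MvPolynomial.aeval (Function.update X v c) p := by
  induction p using MvPolynomial.induction_on with
  | C a => simp
  | add p q hp hq =>
      have := dvd_add hp hq
      convert this using 1
      simp only [map_add]; ring
  | mul_X p w hp =>
      by_cases h : w = v
      · subst h
        have he : MvPolynomial.aeval (Function.update X w c) (p * X w)
            = MvPolynomial.aeval (Function.update X w c) p * c := by
          simp [Function.update_self]
        rw [he]
        have : p * X w - MvPolynomial.aeval (Function.update X w c) p * c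
            = p * (X w - c) + (p - MvPolynomial.aeval (Function.update X w c) p) * c := by ring
        rw [this]
        exact dvd_add (Dvd.intro_left p rfl) (hp.mul_right c)
      · have he : MvPolynomial.aeval (Function.update X v c) (p * X w)
            = MvPolynomial.aeval (Function.update X v c) p * X w := by
          simp [Function.update_of_ne h]
        rw [he]
        have : p * X w - MvPolynomial.aeval (Function.update X v c) p * X w
            = (p - MvPolynomial.aeval (Function.update X v c) p) * X w := by ring
        rw [this]
        exact hp.mul_right _

lemma aux_det_zero_of_rows_in_span {R : Type*} [CommRing R] {m : ℕ} {ι : Type*} [Fintype ι]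
    (h : Fintype.card ι < m) (w : ι → Fin m → R) (M : Matrix (Fin m) (Fin m) R)
    (hM : ∀ k, ∃ c : ι → R, M k = ∑ d, c d • w d) : M.det = 0 := by
  choose c hc using hM
  have hdet : M.det = Matrix.detRowAlternating M := rfl
  rw [hdet]
  have : (M : Fin m → Fin m → R) = fun k => ∑ d, c k d • w d := funext hc
  rw [show Matrix.detRowAlternating M
      = Matrix.detRowAlternating.toMultilinearMap (fun k => ∑ d, c k d • w d) by
    rw [← this]; rfl]
  rw [MultilinearMap.map_sum]
  apply Finset.sum_eq_zero
  intro p _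
  have := MultilinearMap.map_smul_univ Matrix.detRowAlternating.toMultilinearMap
    (fun k => c k (p k)) (fun k => w (p k))
  rw [this]
  obtain ⟨k₁, k₂, hne, heq⟩ := Fintype.exists_ne_map_eq_of_card_lt p (by simpa using h)
  have hz : Matrix.detRowAlternating (fun k => w (p k)) = 0 :=
    Matrix.detRowAlternating.map_eq_zero_of_eq _ (by rw [heq]) hne
  change (∏ k, c k (p k)) • Matrix.detRowAlternating (fun k => w (p k)) = 0
  rw [hz, smul_zero]

lemma aux_prod_linear_expand {R : Type*} [CommRing R] {ι : Type*} [DecidableEq ι]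
    (s : Finset ι) (b : ι → R) (z : R) (r : ℕ) (hs : s.card < r) :
    ∏ ℓ ∈ s, (1 + b ℓ * z)
      = ∑ d : Fin r, (∑ t ∈ s.powerset.filter (fun t => t.card = (d : ℕ)),
          ∏ ℓ ∈ t, b ℓ) * z ^ (d : ℕ) := by
  have lhs : ∏ ℓ ∈ s, (1 + b ℓ * z)
      = ∑ t ∈ s.powerset, (∏ ℓ ∈ t, b ℓ) * z ^ t.card := by
    simp_rw [add_comm (1 : R)]
    rw [Finset.prod_add]
    refine Finset.sum_congr rfl fun t _ => ?_
    simp [Finset.prod_mul_distrib, Finset.prod_const, mul_assoc]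
  rw [lhs, Fin.sum_univ_eq_sum_range
    (fun d => (∑ t ∈ s.powerset.filter (fun t => t.card = d), ∏ ℓ ∈ t, b ℓ) * z ^ d)]
  rw [← Finset.sum_fiberwise_of_maps_to (g := Finset.card)
    (fun t ht => Finset.mem_range.2 (lt_of_le_of_lt
      (Finset.card_le_card (Finset.mem_powerset.1 ht)) hs))
    (fun t => (∏ ℓ ∈ t, b ℓ) * z ^ t.card)]
  refine Finset.sum_congr rfl fun d _ => ?_
  rw [Finset.sum_mul]
  refine Finset.sum_congr rfl fun t ht => ?_
  rw [(Finset.mem_filter.1 ht).2]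

/-- coefficient of `z` in the `(ℓ,k)` factor after substituting `x_i ↦ -y_j` -/
noncomputable def Bco (n : ℕ) (i j : Fin (n - 1)) (ℓ : Fin (n - 1)) (k : Fin n) :
    MvPolynomial (PVar n) ℤ :=
  if (k : ℕ) ≤ (ℓ : ℕ) then Yv ℓ else (if ℓ = i then Yv j else -Xv ℓ)

noncomputable def Gm (n : ℕ) (i j : Fin (n - 1)) (k m : Fin n) : MvPolynomial (PVar n) ℤ :=
  ∏ ℓ : Fin (n - 1), (1 + Bco n i j ℓ k * Zv m)

lemma subst_phat (n : ℕ) (i j : Fin (n - 1)) :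
    MvPolynomial.aeval (Function.update MvPolynomial.X (Sum.inl i) (-(Yv j))) (Phat n)
      = ∑ σ : Equiv.Perm (Fin n), (Equiv.Perm.sign σ : ℤ) • ∏ k, Gm n i j k (σ k) := by
  set u := Function.update (MvPolynomial.X (R := ℤ) (σ := PVar n)) (Sum.inl i) (-(Yv j)) with hu
  have hY : ∀ ℓ : Fin (n-1), MvPolynomial.aeval u (Yv ℓ) = Yv ℓ := by
    intro ℓ; simp [Yv, hu, Function.update_apply]
  have hZ : ∀ m : Fin n, MvPolynomial.aeval u (Zv m) = Zv m := by
    intro m; simp [Zv, hu, Function.update_apply]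
  have hX : ∀ ℓ : Fin (n-1), MvPolynomial.aeval u (Xv ℓ)
      = if ℓ = i then -(Yv j) else Xv ℓ := by
    intro ℓ; simp [Xv, hu, Function.update_apply]
  rw [Phat, map_sum]
  refine Finset.sum_congr rfl fun σ _ => ?_
  rw [map_zsmul]
  congr 1
  rw [map_prod]
  have step1 : ∀ ℓ : Fin (n-1),
      MvPolynomial.aeval u
        ((∏ k ∈ Finset.univ.filter (fun k : Fin n => (k : ℕ) ≤ (ℓ : ℕ)),
          (1 + Yv ℓ * Zv (σ k))) *
        ∏ k ∈ Finset.univ.filter (fun k : Fin n => (ℓ : ℕ) < (k : ℕ)),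
          (1 - Xv ℓ * Zv (σ k)))
      = ∏ k : Fin n, (1 + Bco n i j ℓ k * Zv (σ k)) := by
    intro ℓ
    rw [map_mul, map_prod, map_prod]
    rw [← Finset.prod_filter_mul_prod_filter_not Finset.univ
      (fun k : Fin n => (k : ℕ) ≤ (ℓ : ℕ)) (fun k => 1 + Bco n i j ℓ k * Zv (σ k))]
    congr 1
    · refine Finset.prod_congr rfl fun k hk => ?_
      rw [Finset.mem_filter] at hk
      rw [map_add, map_one, map_mul, hY, hZ, Bco, if_pos hk.2]
    · rw [show Finset.univ.filter (fun k : Fin n => ¬ (k : ℕ) ≤ (ℓ : ℕ))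
        = Finset.univ.filter (fun k : Fin n => (ℓ : ℕ) < (k : ℕ)) by
          apply Finset.filter_congr; intro k _; simp [not_le]]
      refine Finset.prod_congr rfl fun k hk => ?_
      rw [Finset.mem_filter] at hk
      rw [map_sub, map_one, map_mul, hX, hZ, Bco, if_neg (not_le.2 hk.2)]
      by_cases h : ℓ = i <;> simp [h] <;> ring
  rw [Finset.prod_congr rfl (fun ℓ _ => step1 ℓ), Finset.prod_comm]
  rfl

noncomputable def l0 (n : ℕ) (i j : Fin (n - 1)) (k : Fin n) : Fin (n - 1) :=
  if (k : ℕ) ≤ (j : ℕ) then j else i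

noncomputable def Hm (n : ℕ) (i j : Fin (n - 1)) (k m : Fin n) : MvPolynomial (PVar n) ℤ :=
  ∏ ℓ ∈ Finset.univ.erase (l0 n i j k), (1 + Bco n i j ℓ k * Zv m)

lemma Gm_factor (n : ℕ) (i j : Fin (n - 1)) (hij : i < j) (k m : Fin n) :
    Gm n i j k m = (1 + Yv j * Zv m) * Hm n i j k m := by
  rw [Gm, ← Finset.mul_prod_erase Finset.univ _ (Finset.mem_univ (l0 n i j k)), Hm]
  congr 2
  rw [l0, Bco]
  by_cases h : (k : ℕ) ≤ (j : ℕ)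
  · simp [h]
  · have h2 : ¬ (k : ℕ) ≤ (i : ℕ) := by
      have : (i : ℕ) < (j : ℕ) := hij
      omega
    simp [h, h2]

lemma det_Hm_zero (n : ℕ) (hn : 2 ≤ n) (i j : Fin (n - 1)) :
    (Matrix.of (Hm n i j)).det = 0 := by
  refine aux_det_zero_of_rows_in_span (ι := Fin (n - 1)) (by simp; omega)
    (fun d m => Zv m ^ (d : ℕ)) _ (fun k => ?_)
  refine ⟨fun d => ∑ t ∈ ((Finset.univ.erase (l0 n i j k)).powerset.filter
      (fun t => t.card = (d : ℕ))), ∏ ℓ ∈ t, Bco n i j ℓ k, ?_⟩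
  funext m
  have hs : (Finset.univ.erase (l0 n i j k)).card < n - 1 := by
    rw [Finset.card_erase_of_mem (Finset.mem_univ _), Finset.card_univ, Fintype.card_fin]
    omega
  have := aux_prod_linear_expand (Finset.univ.erase (l0 n i j k))
    (fun ℓ => Bco n i j ℓ k) (Zv m) (n - 1) hs
  simp only [Matrix.of_apply, Hm]
  rw [this, Finset.sum_apply]
  refine Finset.sum_congr rfl fun d _ => ?_
  simp [smul_eq_mul]

/-- `x_i + y_j` divides `P̂_n` for every `i < j`. -/
theorem stmt12 (n : ℕ) (hn : 2 ≤ n) (i j : Fin (n - 1)) (hij : i < j) :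
    (Xv i + Yv j) ∣ Phat n := by
  have h0 : MvPolynomial.aeval
      (Function.update MvPolynomial.X (Sum.inl i) (-(Yv j))) (Phat n) = 0 := by
    rw [subst_phat]
    have hdet : (Matrix.of fun a b => Gm n i j b a).det
        = ∑ σ : Equiv.Perm (Fin n), (Equiv.Perm.sign σ : ℤ) • ∏ k, Gm n i j k (σ k) := by
      rw [Matrix.det_apply]
      refine Finset.sum_congr rfl fun σ _ => ?_
      rw [Units.smul_def]
      rfl
    rw [← hdet]
    have htr : (Matrix.of fun a b => Gm n i j b a) = (Matrix.of (Gm n i j)).transpose := rfl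
    rw [htr, Matrix.det_transpose]
    have hfac : (Matrix.of (Gm n i j))
        = Matrix.of (fun k m => (1 + Yv j * Zv m) * Hm n i j k m) := by
      funext k m
      exact Gm_factor n i j hij k m
    rw [hfac]
    have hof : (Matrix.of fun k m => (1 + Yv j * Zv m) * Hm n i j k m)
        = Matrix.of fun k m => (1 + Yv j * Zv m) * (Matrix.of (Hm n i j)) k m := rfl
    rw [hof, Matrix.det_mul_row (fun m => 1 + Yv j * Zv m) (Matrix.of (Hm n i j))]
    rw [det_Hm_zero n hn i j, mul_zero]
  have hd := aux_dvd_sub_aeval (Sum.inl i) (-(Yv j)) (Phat n)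
  rw [h0, sub_zero, sub_neg_eq_add] at hd
  exact hd
end
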